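/- arXiv:2507.12831 — 6 statements merged into one kernel-verified Lean document; each statement's English description precedes it below -/
import Mathlib

section
/- Let G = (V,E) be a hypergraph with G = cl(G), i.e., E = cl(E). If G is α-acyclic, then CER(G) = MP(G). -/
open Finset

namespace BPO

variable {N : Type*} [DecidableEq N]

/-- Coordinate index set of `ℝ^{V ∪ E}`: one coordinate for each edge, and one
coordinate (labelled by the corresponding singleton) for each node. -/
def coords (V : Finset N) (E : Finset (Finset N)) : Finset (Finset N) :=
  E ∪ V.image fun v => {v}

/-- A point of `ℝ^{V ∪ E}`. -/
abbrev Pt (V : Finset N) (E : Finset (Finset N)) : Type _ :=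
  {p : Finset N // p ∈ coords V E} → ℝ

/-- Evaluate a coordinate of a point, with the convention `z_∅ = 1`.
For a node `v`, the coordinate `z_v` is `ev z {v}`. -/
noncomputable def ev {V : Finset N} {E : Finset (Finset N)} (z : Pt V E)
    (p : Finset N) : ℝ :=
  if h : p ∈ coords V E then z ⟨p, h⟩ else if p = ∅ then 1 else 0

/-- The multilinear set `S(G)`: binary points with `z_e = ∏_{v ∈ e} z_v`. -/
def mlSet (V : Finset N) (E : Finset (Finset N)) : Set (Pt V E) :=
  { z | (∀ p, z p = 0 ∨ z p = 1) ∧ ∀ e ∈ E, ev z e = ∏ v ∈ e, ev z {v} }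

/-- The multilinear polytope `MP(G)`. -/
noncomputable def MP (V : Finset N) (E : Finset (Finset N)) : Set (Pt V E) :=
  convexHull ℝ (mlSet V E)

/-- The completion `cl(E) = { f ⊆ e : |f| ≥ 2, e ∈ E }`. -/
def clE (E : Finset (Finset N)) : Finset (Finset N) :=
  (E.biUnion Finset.powerset).filter fun g => 2 ≤ g.card

/-- The set of maximal edges of `E`. -/
def maxEdges (E : Finset (Finset N)) : Finset (Finset N) :=
  E.filter fun e => ∀ e' ∈ E, e ⊆ e' → e = e'

/-- The linear function `ψ(U, e)`. -/
noncomputable def psi {V : Finset N} {E : Finset (Finset N)} (z : Pt V E)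
    (U e : Finset N) : ℝ :=
  ∑ W ∈ U.powerset, (if Even W.card then (1 : ℝ) else -1) * ev z ((e \ U) ∪ W)

/-- The complete edge relaxation constraints (`ψ(U,e) ≥ 0` for `U ⊆ e`, `e` a
maximal edge of `E`), imposed on the coordinate space `ℝ^{V ∪ F}`. -/
noncomputable def cerSet (V : Finset N) (E F : Finset (Finset N)) : Set (Pt V F) :=
  { z | ∀ e ∈ maxEdges E, ∀ U ⊆ e, 0 ≤ psi z U e }

/-- The complete edge relaxation `CER(G) ⊆ ℝ^{V ∪ cl(E)}`. -/
noncomputable def CER (V : Finset N) (E : Finset (Finset N)) : Set (Pt V (clE E)) :=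
  cerSet V E (clE E)

/-- Projection onto the coordinates of `ℝ^{V₂ ∪ E₂}`. -/
noncomputable def res (V₂ : Finset N) (E₂ : Finset (Finset N)) {V₁ : Finset N}
    {E₁ : Finset (Finset N)} (z : Pt V₁ E₁) : Pt V₂ E₂ :=
  fun p => ev z p.1

/-- `CER(G)` is an extension of `MP(G)`: `MP(G)` is the image of `CER(G)` under
the projection of `ℝ^{V ∪ cl(E)}` onto `ℝ^{V ∪ E}`. -/
def IsExtension (V : Finset N) (E : Finset (Finset N)) : Prop :=
  MP V E = (fun z : Pt V (clE E) => res V E z) '' CER V E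

/-- The running intersection property for the family `E`. -/
def RunningIntersection (E : Finset (Finset N)) : Prop :=
  ∃ L : List (Finset N), L.Nodup ∧ L.toFinset = E ∧
    ∀ k, 0 < k → k < L.length →
      ∃ j < k, L.getD k ∅ ∩ (L.take k).foldr (· ∪ ·) ∅ ⊆ L.getD j ∅

/-- A hypergraph is α-acyclic if its edge set has the running intersection property. -/
def AlphaAcyclic (E : Finset (Finset N)) : Prop := RunningIntersection E

/-- `s_i = e_i ∩ e_{i+1}` for a cyclic sequence `e_1, …, e_ℓ, e_{ℓ+1} = e_1`. -/
def cycS (c : ℕ → Finset N) (ℓ i : ℕ) : Finset N :=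
  c i ∩ c (if i = ℓ then 1 else i + 1)

/-- A simple cycle `e_1, …, e_ℓ, e_{ℓ+1} = e_1` of length `ℓ`. -/
def IsSimpleCycle (E : Finset (Finset N)) (ℓ : ℕ) (c : ℕ → Finset N) : Prop :=
  3 ≤ ℓ ∧ (∀ i, 1 ≤ i → i ≤ ℓ → c i ∈ E) ∧
    ∀ i j k, 1 ≤ i → i < j → j < k → k ≤ ℓ → ∀ e ∈ E,
      ((cycS c ℓ i ∪ cycS c ℓ j ∪ cycS c ℓ k) \ e).Nonempty

/-- An α-cycle `e_1, …, e_ℓ, e_{ℓ+1} = e_1` of length `ℓ`. -/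
def IsAlphaCycle (E : Finset (Finset N)) (ℓ : ℕ) (c : ℕ → Finset N) : Prop :=
  3 ≤ ℓ ∧ (∀ i, 1 ≤ i → i ≤ ℓ → c i ∈ E) ∧
    (∀ i j, 1 ≤ i → i ≤ ℓ → 1 ≤ j → j ≤ ℓ → i ≠ j → (c i \ c j).Nonempty) ∧
    ∀ i, 1 ≤ i → i ≤ ℓ → ∀ e ∈ E,
      ((cycS c ℓ (if i = 1 then ℓ else i - 1) ∪ cycS c ℓ i ∪
        cycS c ℓ (if i = ℓ then 1 else i + 1)) \ e).Nonempty

/-- A chordless α-cycle: no subsequence `e_i, …, e_j, ẽ, e_i` is an α-cycle. -/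
def Chordless (E : Finset (Finset N)) (ℓ : ℕ) (c : ℕ → Finset N) : Prop :=
  ∀ i j, 1 ≤ i → i < j → j ≤ ℓ → j - i ≤ ℓ - 3 →
    ∀ g ∈ E, (∀ k, i ≤ k → k ≤ j → g ≠ c k) →
      ¬ IsAlphaCycle E (j - i + 2) fun k => if k ≤ j - i + 1 then c (i + k - 1) else g

/-- The edge set `E_{V'}` of the subhypergraph induced by `W`. -/
def indE (E : Finset (Finset N)) (W : Finset N) : Finset (Finset N) :=
  (E.image fun e => e ∩ W).filter fun g => 2 ≤ g.card

/-- The edge set `E_{w→u}` obtained by contracting `w` to `u`. -/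
def contrE (E : Finset (Finset N)) (u w : N) : Finset (Finset N) :=
  E.filter (fun e => w ∉ e) ∪
    (E.filter fun e => w ∈ e ∧ e ≠ {u, w}).image fun e => e.erase w ∪ {u}

/-- The edge set `E'` obtained by expanding `w` to `f`. -/
def expE (E : Finset (Finset N)) (w : N) (f : Finset N) : Finset (Finset N) :=
  insert f
    (E.filter (fun e => w ∉ e) ∪ (E.filter fun e => w ∈ e).image fun e => e.erase w ∪ f)

/-- The coordinate renaming `x_w → z_f`, `x_v → z_v`, `x_e → z_e` (`w ∉ e`),
`x_e → z_{(e∖{w}) ⊎ f}` (`w ∈ e`) used in the expansion operation. -/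
def expRen (w : N) (f : Finset N) (p : Finset N) : Finset N :=
  if p = {w} then f else if w ∈ p then p.erase w ∪ f else p

/-!
For `z ∈ CER(G)` and an edge `e`, the Möbius inversions `mobius (ev z) e T` (`T ⊆ e`) are
compatible under marginalization, and the CER inequalities say that they are nonnegative on the
maximal edges, hence on all edges: they are local probability distributions of the trace `S ∩ e` of
a random node set `S`. In a running intersection order each new edge `f` meets the union `U` of the
previous ones inside a single earlier edge, so the distribution built on `U` and the one on `f`
agree on `U ∩ f` and can be glued conditionally independently. The final distribution on subsets
of `V` has `P(p ⊆ S) = z_p` for every coordinate `p`, which exhibits `z` as a convex combination of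
points of `S(G)`. Conversely, since `cl(G) = G`, a point of `S(G)` has product coordinates on all
subsets of each edge, and `ψ(U, e)` factors as `∏_{e \ U} z_v ∏_U (1 - z_v) ≥ 0`.
-/

/-- For `z ∈ MP(G)` written as a distribution of a random set `S`, `mobius (ev z) e T` is the
probability of `S ∩ e = T`. -/
noncomputable def mobius (F : Finset N → ℝ) (e T : Finset N) : ℝ :=
  ∑ W ∈ (e \ T).powerset, (-1) ^ #W * F (T ∪ W)

noncomputable def marginal (lam : Finset N → ℝ) (U s T : Finset N) : ℝ :=
  ∑ S ∈ U.powerset with S ∩ s = T, lam S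

def HasMarginal (lam : Finset N → ℝ) (U : Finset N) (F : Finset N → ℝ) (e : Finset N) : Prop :=
  ∀ T ⊆ e, marginal lam U e T = mobius F e T

lemma psi_eq_mobius {V : Finset N} {F : Finset (Finset N)} (z : Pt V F) {U e : Finset N}
    (hU : U ⊆ e) : psi z U e = mobius (ev z) e (e \ U) := by
  simp only [psi, mobius, Finset.sdiff_sdiff_eq_self hU, neg_one_pow_eq_ite]

lemma mobius_self (F : Finset N → ℝ) (T : Finset N) : mobius F T T = F T := by
  simp [mobius]

lemma mobius_insert_add_mobius_insert (F : Finset N → ℝ) {a : N} {e T : Finset N} (ha : a ∉ e)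
    (hT : T ⊆ e) : mobius F (insert a e) T + mobius F (insert a e) (insert a T) = mobius F e T := by
  have haT : a ∉ T := fun h => ha (hT h)
  have ha' : a ∉ e \ T := fun h => ha (mem_sdiff.1 h).1
  rw [mobius, mobius, mobius, insert_sdiff_of_notMem _ haT, insert_sdiff_insert,
    sdiff_insert_of_notMem ha, sum_powerset_insert ha', add_assoc, ← sum_add_distrib, add_eq_left]
  refine sum_eq_zero fun W hW => ?_
  have haW : a ∉ W := fun h => ha' (mem_powerset.1 hW h)
  rw [card_insert_of_notMem haW, union_insert, insert_union, pow_succ]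
  ring

lemma marginal_eq_sum_powerset_sdiff (lam : Finset N → ℝ) {U s T : Finset N} (hsU : s ⊆ U)
    (hT : T ⊆ s) : marginal lam U s T = ∑ B ∈ (U \ s).powerset, lam (T ∪ B) := by
  have hsplit : ∀ S ∈ {S ∈ U.powerset | S ∩ s = T}, T ∪ S \ s = S := by
    intro S hS
    rw [← (mem_filter.1 hS).2, union_comm, sdiff_union_inter]
  refine sum_bij' (fun S _ => S \ s) (fun B _ => T ∪ B) ?_ ?_ hsplit ?_
    fun S hS => by rw [hsplit S hS]
  · intro S hS
    simp only [mem_filter, mem_powerset] at hS ⊢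
    exact sdiff_subset_sdiff hS.1 subset_rfl
  · intro B hB
    simp only [mem_filter, mem_powerset] at hB ⊢
    refine ⟨union_subset (hT.trans hsU) (hB.trans sdiff_subset), ?_⟩
    rw [union_inter_distrib_right, inter_eq_left.2 hT,
      disjoint_iff_inter_eq_empty.1 (subset_sdiff.1 hB).2, union_empty]
  · intro B hB
    simp only [mem_powerset, subset_sdiff] at hB
    rw [union_sdiff_distrib, sdiff_eq_empty_iff_subset.2 hT, empty_union, hB.2.sdiff_eq_left]

lemma sum_powerset_mobius_union (F : Finset N → ℝ) {s D T : Finset N} (hD : Disjoint s D)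
    (hT : T ⊆ s) : ∑ B ∈ D.powerset, mobius F (s ∪ D) (T ∪ B) = mobius F s T := by
  induction D using Finset.induction_on with
  | empty => simp
  | @insert a D ha ih =>
    have has : a ∉ s ∪ D := by
      simp [ha, (disjoint_insert_right.1 hD).1]
    rw [sum_powerset_insert ha, union_insert, ← sum_add_distrib, ← ih (disjoint_insert_right.1 hD).2]
    refine sum_congr rfl fun B hB => ?_
    rw [union_insert, mobius_insert_add_mobius_insert F has
      (union_subset_union hT (mem_powerset.1 hB))]

lemma marginal_mobius (F : Finset N → ℝ) {s e T : Finset N} (hse : s ⊆ e) (hT : T ⊆ s) :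
    marginal (mobius F e) e s T = mobius F s T := by
  rw [marginal_eq_sum_powerset_sdiff _ hse hT]
  have h := sum_powerset_mobius_union F (disjoint_sdiff : Disjoint s (e \ s)) hT
  rwa [union_sdiff_of_subset hse] at h

lemma marginal_congr {lam lam' : Finset N → ℝ} {U : Finset N} (h : ∀ S ⊆ U, lam S = lam' S)
    (s T : Finset N) : marginal lam U s T = marginal lam' U s T := by
  refine sum_congr rfl fun S hS => h S ?_
  exact mem_powerset.1 (mem_filter.1 hS).1

lemma marginal_marginal (lam : Finset N → ℝ) {U s u : Finset N} (hsu : s ⊆ u) (T : Finset N) :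
    marginal (marginal lam U u) u s T = marginal lam U s T := by
  have hmaps : ∀ S ∈ U.powerset, S ∩ u ∈ u.powerset := fun S _ => mem_powerset.2 inter_subset_right
  rw [marginal, marginal, sum_filter, sum_filter, ← sum_fiberwise_of_maps_to hmaps]
  refine sum_congr rfl fun A _ => ?_
  have hfiber : ∀ S ∈ {S ∈ U.powerset | S ∩ u = A}, S ∩ s = A ∩ s := by
    intro S hS
    rw [← (mem_filter.1 hS).2, inter_assoc, inter_eq_right.2 hsu]
  by_cases hA : A ∩ s = T
  · rw [if_pos hA, marginal]
    exact sum_congr rfl fun S hS => by rw [if_pos (by rw [hfiber S hS, hA])]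
  · rw [if_neg hA]
    exact (sum_eq_zero fun S hS => by rw [if_neg (by rwa [hfiber S hS])]).symm

lemma HasMarginal.mono {lam F : Finset N → ℝ} {U e s : Finset N} (h : HasMarginal lam U F e)
    (hse : s ⊆ e) : HasMarginal lam U F s := by
  intro T hT
  rw [← marginal_marginal lam hse, marginal_congr (fun A hA => h A hA), marginal_mobius F hse hT]

lemma HasMarginal.of_marginal_eq {lam lam' F : Finset N → ℝ} {U U' e : Finset N}
    (h : HasMarginal lam U F e) (heU : e ⊆ U) (hlam : ∀ A ⊆ U, marginal lam' U' U A = lam A) :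
    HasMarginal lam' U' F e := by
  intro T hT
  rw [← marginal_marginal lam' heU, marginal_congr hlam, h T hT]

/-- The gluing of `α` on `U` and `β` on `f` that makes the two sides conditionally independent
given the trace on `U ∩ f`. Where the denominator vanishes, `x / 0 = 0` yields `0`, which is the
right value because `α` vanishes there too. -/
noncomputable def glue (α β : Finset N → ℝ) (U f S : Finset N) : ℝ :=
  α (S ∩ U) * β (S ∩ f) / marginal α U (U ∩ f) (S ∩ (U ∩ f))

section Glue

variable {α β : Finset N → ℝ} {U f : Finset N}

lemma marginal_nonneg (hα : ∀ S ⊆ U, 0 ≤ α S) (s T : Finset N) : 0 ≤ marginal α U s T :=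
  sum_nonneg fun S hS => hα S (mem_powerset.1 (mem_filter.1 hS).1)

lemma glue_nonneg (hα : ∀ S ⊆ U, 0 ≤ α S) (hβ : ∀ S ⊆ f, 0 ≤ β S) (S : Finset N) :
    0 ≤ glue α β U f S :=
  div_nonneg (mul_nonneg (hα _ inter_subset_right) (hβ _ inter_subset_right))
    (marginal_nonneg hα _ _)

lemma marginal_glue_left (hα : ∀ S ⊆ U, 0 ≤ α S)
    (hagree : ∀ T ⊆ U ∩ f, marginal β f (U ∩ f) T = marginal α U (U ∩ f) T) {A : Finset N}
    (hA : A ⊆ U) : marginal (glue α β U f) (U ∪ f) U A = α A := by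
  set s := U ∩ f
  have hterm : ∀ B ∈ (f \ U).powerset,
      glue α β U f (A ∪ B) = α A * β (A ∩ s ∪ B) / marginal α U s (A ∩ s) := by
    intro B hB
    obtain ⟨hBf, hBU⟩ := subset_sdiff.1 (mem_powerset.1 hB)
    have hAB_U : (A ∪ B) ∩ U = A := by grind
    have hAB_f : (A ∪ B) ∩ f = A ∩ s ∪ B := by grind
    have hAB_s : (A ∪ B) ∩ s = A ∩ s := by grind
    rw [glue, hAB_U, hAB_f, hAB_s]
  have hβ_sum : ∑ B ∈ (f \ U).powerset, β (A ∩ s ∪ B) = marginal α U s (A ∩ s) := by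
    rw [← hagree _ inter_subset_right, ← sdiff_inter_self_right f U,
      marginal_eq_sum_powerset_sdiff β inter_subset_right inter_subset_right]
  rw [marginal_eq_sum_powerset_sdiff _ subset_union_left hA, union_sdiff_left, sum_congr rfl hterm,
    ← sum_div, ← mul_sum, hβ_sum]
  rcases eq_or_ne (marginal α U s (A ∩ s)) 0 with h0 | h0
  · have hαA : α A ≤ marginal α U s (A ∩ s) :=
      single_le_sum (fun S hS => hα S (mem_powerset.1 (mem_filter.1 hS).1))
        (mem_filter.2 ⟨mem_powerset.2 hA, rfl⟩)
    rw [h0, div_zero]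
    exact (le_antisymm (h0 ▸ hαA) (hα A hA)).symm
  · exact mul_div_cancel_right₀ _ h0

lemma glue_comm (hagree : ∀ T ⊆ U ∩ f, marginal β f (U ∩ f) T = marginal α U (U ∩ f) T)
    (S : Finset N) : glue α β U f S = glue β α f U S := by
  rw [glue, glue, inter_comm f U, hagree _ inter_subset_right, mul_comm]

lemma marginal_glue_right (hβ : ∀ S ⊆ f, 0 ≤ β S)
    (hagree : ∀ T ⊆ U ∩ f, marginal β f (U ∩ f) T = marginal α U (U ∩ f) T) {T : Finset N}
    (hT : T ⊆ f) : marginal (glue α β U f) (U ∪ f) f T = β T := by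
  have hagree' : ∀ T ⊆ f ∩ U, marginal α U (f ∩ U) T = marginal β f (f ∩ U) T := by
    rw [inter_comm f U]
    exact fun T hT => (hagree T hT).symm
  rw [marginal_congr (fun S _ => glue_comm hagree S), union_comm]
  exact marginal_glue_left hβ hagree' hT

end Glue

lemma exists_extension_hasMarginal {F lam : Finset N → ℝ} {U f : Finset N}
    (hlam : ∀ S ⊆ U, 0 ≤ lam S) (hf : ∀ T ⊆ f, 0 ≤ mobius F f T)
    (hUf : HasMarginal lam U F (U ∩ f)) :
    ∃ lam' : Finset N → ℝ, (∀ S ⊆ U ∪ f, 0 ≤ lam' S) ∧ HasMarginal lam' (U ∪ f) F f ∧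
      ∀ e ⊆ U, HasMarginal lam U F e → HasMarginal lam' (U ∪ f) F e := by
  have hagree : ∀ T ⊆ U ∩ f, marginal (mobius F f) f (U ∩ f) T = marginal lam U (U ∩ f) T :=
    fun T hT => by rw [marginal_mobius F inter_subset_right hT, hUf T hT]
  exact ⟨glue lam (mobius F f) U f, fun S _ => glue_nonneg hlam hf S,
    fun T hT => marginal_glue_right hf hagree hT,
    fun e heU he => he.of_marginal_eq heU fun A hA => marginal_glue_left hlam hagree hA⟩

lemma mem_foldr_union {l : List (Finset N)} {x : N} :
    x ∈ l.foldr (· ∪ ·) ∅ ↔ ∃ e ∈ l, x ∈ e := by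
  induction l with
  | nil => simp
  | cons a l ih => simp [ih]

lemma subset_foldr_union {l : List (Finset N)} {e : Finset N} (he : e ∈ l) :
    e ⊆ l.foldr (· ∪ ·) ∅ :=
  fun _ hx => mem_foldr_union.2 ⟨e, he, hx⟩

theorem exists_hasMarginal_of_runningIntersection (F : Finset N → ℝ) (L : List (Finset N))
    (hrip : ∀ k, 0 < k → k < L.length →
      ∃ j < k, L.getD k ∅ ∩ (L.take k).foldr (· ∪ ·) ∅ ⊆ L.getD j ∅)
    (hF_empty : 0 ≤ F ∅) (hF : ∀ e ∈ L, ∀ T ⊆ e, 0 ≤ mobius F e T) :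
    ∃ lam : Finset N → ℝ, (∀ S ⊆ L.foldr (· ∪ ·) ∅, 0 ≤ lam S) ∧
      ∀ e, (e = ∅ ∨ e ∈ L) → HasMarginal lam (L.foldr (· ∪ ·) ∅) F e := by
  -- `e = ∅` records the total mass `F ∅`, along which the first edge is glued.
  suffices h : ∀ k ≤ L.length, ∃ lam : Finset N → ℝ,
      (∀ S ⊆ (L.take k).foldr (· ∪ ·) ∅, 0 ≤ lam S) ∧
      ∀ e, (e = ∅ ∨ e ∈ L.take k) → HasMarginal lam ((L.take k).foldr (· ∪ ·) ∅) F e by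
    simpa using h L.length le_rfl
  intro k hk
  induction k with
  | zero =>
    refine ⟨fun _ => F ∅, fun _ _ => hF_empty, ?_⟩
    simp [HasMarginal, marginal, mobius]
  | succ k ih =>
    obtain ⟨lam, hlam, hmarg⟩ := ih (by omega)
    have hkL : k < L.length := hk
    set U := (L.take k).foldr (· ∪ ·) ∅ with hU
    set f := L[k]
    have htake : L.take (k + 1) = L.take k ++ [f] := by
      rw [List.take_add_one, List.getElem?_eq_getElem hkL]
      rfl
    have hUf : HasMarginal lam U F (U ∩ f) := by
      rcases Nat.eq_zero_or_pos k with rfl | hk0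
      · simpa [hU] using hmarg ∅ (Or.inl rfl)
      · obtain ⟨j, hjk, hj⟩ := hrip k hk0 hkL
        rw [List.getD_eq_getElem _ _ hkL, List.getD_eq_getElem _ _ (hjk.trans hkL)] at hj
        have hjL : L[j] ∈ L.take k := List.mem_take_iff_getElem.2 ⟨j, by omega, rfl⟩
        exact (hmarg _ (Or.inr hjL)).mono (inter_comm U f ▸ hj)
    obtain ⟨lam', hlam', hf_marg, hext⟩ :=
      exists_extension_hasMarginal hlam (hF f (List.getElem_mem hkL)) hUf
    have hunion : (L.take (k + 1)).foldr (· ∪ ·) ∅ = U ∪ f := by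
      ext x
      simp only [mem_union, hU, mem_foldr_union, htake, List.mem_append, List.mem_singleton,
        or_and_right, exists_or, exists_eq_left]
    rw [hunion, htake]
    refine ⟨lam', hlam', ?_⟩
    rintro e (rfl | he)
    · exact hext ∅ (empty_subset U) (hmarg ∅ (Or.inl rfl))
    · rcases List.mem_append.1 he with he | he
      · exact hext e (subset_foldr_union he) (hmarg e (Or.inr he))
      · rw [List.mem_singleton.1 he]
        exact hf_marg

section Polytope

variable {V : Finset N} {E : Finset (Finset N)}

lemma empty_notMem_of_clE_eq (hcl : clE E = E) : ∅ ∉ E := by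
  intro h
  rw [← hcl, clE, mem_filter] at h
  simp at h

lemma ev_empty (hE : ∅ ∉ E) (z : Pt V E) : ev z ∅ = 1 := by
  have hnot : (∅ : Finset N) ∉ coords V E := by
    simp [coords, hE]
  simp [ev, hnot]

lemma exists_mem_coords_subset (hcover : ∀ v ∈ V, ∃ e ∈ E, v ∈ e) {p : Finset N}
    (hp : p ∈ coords V E) : ∃ e ∈ E, p ⊆ e := by
  rcases mem_union.1 hp with hp | hp
  · exact ⟨p, hp, subset_rfl⟩
  · obtain ⟨v, hv, rfl⟩ := mem_image.1 hp
    obtain ⟨e, he, hve⟩ := hcover v hv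
    exact ⟨e, he, singleton_subset_iff.2 hve⟩

lemma exists_mem_maxEdges_superset {e : Finset N} (he : e ∈ E) : ∃ m ∈ maxEdges E, e ⊆ m := by
  obtain ⟨m, hem, hm⟩ := E.exists_le_maximal he
  exact ⟨m, mem_filter.2 ⟨hm.prop, fun e' he' hme' => le_antisymm hme' (hm.2 he' hme')⟩, hem⟩

lemma mobius_nonneg_of_mem_cerSet {F : Finset (Finset N)} {z : Pt V F} (hz : z ∈ cerSet V E F)
    {e T : Finset N} (he : e ∈ E) (hT : T ⊆ e) : 0 ≤ mobius (ev z) e T := by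
  obtain ⟨m, hm, hem⟩ := exists_mem_maxEdges_superset he
  rw [← marginal_mobius _ hem hT]
  refine sum_nonneg fun A hA => ?_
  have hAm : A ⊆ m := mem_powerset.1 (mem_filter.1 hA).1
  have h := hz m hm (m \ A) sdiff_subset
  rwa [psi_eq_mobius z sdiff_subset, Finset.sdiff_sdiff_eq_self hAm] at h

def vertex (V : Finset N) (E : Finset (Finset N)) (S : Finset N) : Pt V E :=
  fun p => if p.1 ⊆ S then 1 else 0

lemma ev_vertex {S p : Finset N} (hp : p ∈ coords V E) :
    ev (vertex V E S) p = if p ⊆ S then 1 else 0 := by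
  simp [ev, hp, vertex]

lemma vertex_mem_mlSet (hVsub : ∀ e ∈ E, e ⊆ V) (S : Finset N) : vertex V E S ∈ mlSet V E := by
  refine ⟨fun p => by unfold vertex; split_ifs <;> simp, fun e he => ?_⟩
  have hcoord : ∀ v ∈ e, ({v} : Finset N) ∈ coords V E :=
    fun v hv => mem_union_right _ (mem_image_of_mem _ (hVsub e he hv))
  rw [ev_vertex (mem_union_left _ he), prod_congr rfl fun v hv => ev_vertex (hcoord v hv)]
  simp [prod_boole, subset_iff]

lemma mem_MP_of_marginal (hVsub : ∀ e ∈ E, e ⊆ V) {z : Pt V E} {lam : Finset N → ℝ}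
    {U : Finset N} (hlam : ∀ S ⊆ U, 0 ≤ lam S) (hmass : marginal lam U ∅ ∅ = 1)
    (hz : ∀ p : {p // p ∈ coords V E}, marginal lam U p p = z p) : z ∈ MP V E := by
  have hsum : z = ∑ S ∈ U.powerset, lam S • vertex V E S := by
    funext p
    rw [← hz p, marginal, sum_filter, Finset.sum_apply]
    refine sum_congr rfl fun S _ => ?_
    simp [vertex, inter_eq_right]
  have hmass' : ∑ S ∈ U.powerset, lam S = 1 := by simpa [marginal] using hmass
  rw [hsum]
  exact (convex_convexHull ℝ _).sum_mem (fun S hS => hlam S (mem_powerset.1 hS)) hmass'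
    fun S _ => subset_convexHull ℝ _ (vertex_mem_mlSet hVsub S)

lemma mobius_eq_prod {F : Finset N → ℝ} {x : N → ℝ} {e T : Finset N}
    (hF : ∀ p ⊆ e, F p = ∏ v ∈ p, x v) (hT : T ⊆ e) :
    mobius F e T = (∏ v ∈ T, x v) * ∏ v ∈ e \ T, (1 - x v) := by
  rw [prod_sub, mul_sum, mobius]
  refine sum_congr rfl fun W hW => ?_
  have hW' := mem_powerset.1 hW
  rw [hF _ (union_subset hT (hW'.trans sdiff_subset)),
    prod_union (disjoint_sdiff.mono_right hW')]
  simp only [prod_const_one, mul_one]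
  ring

lemma ev_eq_prod_of_mem_mlSet (hcl : clE E = E) {z : Pt V E} (hz : z ∈ mlSet V E)
    {e p : Finset N} (he : e ∈ E) (hp : p ⊆ e) : ev z p = ∏ v ∈ p, ev z {v} := by
  rcases p.eq_empty_or_nonempty with rfl | hne
  · simp [ev_empty (empty_notMem_of_clE_eq hcl)]
  by_cases h2 : 2 ≤ #p
  · exact hz.2 p (hcl ▸ mem_filter.2 ⟨mem_biUnion.2 ⟨e, he, mem_powerset.2 hp⟩, h2⟩)
  · obtain ⟨v, rfl⟩ := card_eq_one.1 (by have := hne.card_pos; omega : #p = 1)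
    simp

lemma ev_singleton_of_mem_mlSet {z : Pt V E} (hz : z ∈ mlSet V E) (v : N) :
    ev z {v} = 0 ∨ ev z {v} = 1 := by
  unfold ev
  split_ifs with h
  exacts [hz.1 _, absurd ‹_› (singleton_ne_empty v), Or.inl rfl]

lemma mlSet_subset_cerSet (hcl : clE E = E) : mlSet V E ⊆ cerSet V E E := by
  intro z hz e he U hU
  rw [psi_eq_mobius z hU, mobius_eq_prod
    (fun p hp => ev_eq_prod_of_mem_mlSet hcl hz (mem_filter.1 he).1 hp) sdiff_subset]
  refine mul_nonneg (prod_nonneg fun v _ => ?_) (prod_nonneg fun v _ => ?_) <;>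
    rcases ev_singleton_of_mem_mlSet hz v with h | h <;> simp [h]

lemma ev_add_smul {F : Finset (Finset N)} (x y : Pt V F) {a b : ℝ} (hab : a + b = 1)
    (p : Finset N) : ev (a • x + b • y) p = a * ev x p + b * ev y p := by
  unfold ev
  split_ifs
  · simp
  · rw [mul_one, mul_one, hab]
  · simp

lemma convex_cerSet (F : Finset (Finset N)) : Convex ℝ (cerSet V E F) := by
  intro x hx y hy a b ha hb hab e he U hU
  have hpsi : psi (a • x + b • y) U e = a * psi x U e + b * psi y U e := by
    simp only [psi, ev_add_smul x y hab, mul_sum, ← sum_add_distrib]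
    exact sum_congr rfl fun _ _ => by ring
  rw [hpsi]
  exact add_nonneg (mul_nonneg ha (hx e he U hU)) (mul_nonneg hb (hy e he U hU))

end Polytope

theorem cerSet_subset_MP {V : Finset N} {E : Finset (Finset N)} (hVsub : ∀ e ∈ E, e ⊆ V)
    (hcover : ∀ v ∈ V, ∃ e ∈ E, v ∈ e) (hcl : clE E = E) (hacyc : AlphaAcyclic E) :
    cerSet V E E ⊆ MP V E := by
  intro z hz
  obtain ⟨L, -, rfl, hrip⟩ := hacyc
  have hz_empty := ev_empty (empty_notMem_of_clE_eq hcl) z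
  obtain ⟨lam, hlam, hmarg⟩ := exists_hasMarginal_of_runningIntersection (ev z) L hrip
    (hz_empty ▸ zero_le_one) fun e he T hT =>
      mobius_nonneg_of_mem_cerSet hz (List.mem_toFinset.2 he) hT
  refine mem_MP_of_marginal hVsub hlam ?_ fun p => ?_
  · rw [hmarg ∅ (Or.inl rfl) ∅ subset_rfl, mobius_self, hz_empty]
  · obtain ⟨e, he, hpe⟩ := exists_mem_coords_subset hcover p.2
    rw [(hmarg e (Or.inr (List.mem_toFinset.1 he))).mono hpe p.1 subset_rfl, mobius_self, ev,
      dif_pos p.2]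

theorem stmt1_general {N : Type*} [DecidableEq N] (V : Finset N) (E : Finset (Finset N))
    (hVsub : ∀ e ∈ E, e ⊆ V)
    (hcover : ∀ v ∈ V, ∃ e ∈ E, v ∈ e)
    (hcl : clE E = E) (hacyc : AlphaAcyclic E) :
    cerSet V E E = MP V E :=
  (cerSet_subset_MP hVsub hcover hcl hacyc).antisymm
    (convexHull_min (mlSet_subset_cerSet hcl) (convex_cerSet E))

theorem stmt1 {N : Type*} [DecidableEq N] (V : Finset N) (E : Finset (Finset N))
    (hcard : ∀ e ∈ E, 2 ≤ e.card) (hVsub : ∀ e ∈ E, e ⊆ V)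
    (hcover : ∀ v ∈ V, ∃ e ∈ E, v ∈ e)
    (hcl : clE E = E) (hacyc : AlphaAcyclic E) :
    cerSet V E E = MP V E :=
  stmt1_general V E hVsub hcover hcl hacyc

end BPO
end

section
/- A hypergraph G is α-acyclic if and only if it does not contain a simple cycle. -/
open Finset

/-!
An enumeration with the running intersection property is the same as an ear decomposition: each
new edge `e` meets the union of the previous ones inside a single earlier edge `g`. Putting `g`
in place of `e` along a simple cycle only enlarges the intersections `s_i`, so the cycle stays
simple with one edge fewer in the family; hence ear-decomposable families have no simple cycle.

Conversely, a family without simple cycles is conformal (a minimal clique of the 2-section not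
covered by an edge gives a simple triangle) and its 2-section is chordal (a hole gives a simple
cycle through the edges spanned by its consecutive vertices). By Dirac's theorem a chordal graph
has a simplicial vertex, which conformality puts in a single edge unless some edge contains
another one. Removing that vertex, or the smaller edge, and inducting on the total size yields an
ear decomposition.
-/

theorem Relation.ReflTransGen.exists_rel_of_not {α : Type*} {r : α → α → Prop} {p : α → Prop}
    {a b : α} (h : ReflTransGen r a b) (ha : p a) (hb : ¬ p b) :
    ∃ x y, r x y ∧ p x ∧ ¬ p y := by
  induction h with
  | refl => exact absurd ha hb
  | @tail c d _ hcd ih =>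
    by_cases hc : p c
    · exact ⟨c, d, hcd, hc, hb⟩
    · exact ih hc

namespace SimpleGraph

variable {V : Type*} (G : SimpleGraph V)

/-- A hole `v 0, v 1, …, v m = v 0`: the last clause makes `v 0, …, v (m - 1)` distinct and
the cycle chordless. -/
def IsHole (m : ℕ) (v : ℕ → V) : Prop :=
  4 ≤ m ∧ v m = v 0 ∧ (∀ r < m, G.Adj (v r) (v (r + 1))) ∧
    ∀ a b, a < b → b < m → (v a = v b ∨ G.Adj (v a) (v b)) → b = a + 1 ∨ (a = 0 ∧ b + 1 = m)

def IsChordal : Prop := ∀ m v, ¬ G.IsHole m v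

def IsSimplicialIn (W : Set V) (u : V) : Prop := G.IsClique (W ∩ G.neighborSet u)

def IsWalkVia (C : Set V) (n : ℕ) (w : ℕ → V) : Prop :=
  (∀ r < n, G.Adj (w r) (w (r + 1))) ∧ ∀ r, 0 < r → r < n → w r ∈ C

/-- Counting equal vertices as adjacent, this also makes the walk a path. -/
def IsChordlessWalk (n : ℕ) (w : ℕ → V) : Prop :=
  ∀ a b, a < b → b ≤ n → (w a = w b ∨ G.Adj (w a) (w b)) → b = a + 1

def ReachableIn (X : Finset V) : V → V → Prop :=
  Relation.ReflTransGen fun p q => G.Adj p q ∧ p ∈ X ∧ q ∈ X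

variable {G}

theorem IsChordal.of_induced {G' : SimpleGraph V} (hG : G.IsChordal) (X : Set V)
    (h : ∀ x y, G'.Adj x y ↔ G.Adj x y ∧ x ∈ X ∧ y ∈ X) : G'.IsChordal := by
  rintro m v ⟨hm, hv, hadj, hchord⟩
  refine hG m v ⟨hm, hv, fun r hr => ((h _ _).mp (hadj r hr)).1,
    fun a b hab hb hrel => hchord a b hab hb (hrel.imp_right fun hab' => ?_)⟩
  exact (h _ _).mpr ⟨hab', ((h _ _).mp (hadj a (by omega))).2.1, ((h _ _).mp (hadj b hb)).2.1⟩

theorem IsSimplicialIn.of_subset {W W' : Set V} {u : V} (h : G.IsSimplicialIn W' u)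
    (hW : ∀ y ∈ W, G.Adj u y → y ∈ W') : G.IsSimplicialIn W u :=
  h.subset fun y (hy : y ∈ W ∩ G.neighborSet u) => show y ∈ W' ∩ _ from ⟨hW y hy.1 hy.2, hy.2⟩

section Walks

variable {C : Set V} {n : ℕ} {w : ℕ → V}

theorem IsWalkVia.snoc {t : V} (hw : G.IsWalkVia C n w) (hC : 0 < n → w n ∈ C)
    (ht : G.Adj (w n) t) : G.IsWalkVia C (n + 1) (Function.update w (n + 1) t) := by
  refine ⟨fun r hr => ?_, fun r hr0 hr => ?_⟩
  · rw [Function.update_of_ne (by omega)]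
    rcases Nat.lt_succ_iff_lt_or_eq.mp hr with hr | rfl
    · rw [Function.update_of_ne (by omega)]
      exact hw.1 r hr
    · rwa [Function.update_self]
  · rw [Function.update_of_ne (by omega)]
    rcases Nat.lt_succ_iff_lt_or_eq.mp hr with hr | rfl
    · exact hw.2 r hr0 hr
    · exact hC hr0

/-- Jumping from `w a` straight to `w (a + k + 1)` shortens the walk by `k`. -/
theorem IsWalkVia.shortcut {a k : ℕ} (hw : G.IsWalkVia C n w) (hk : a + k ≤ n)
    (hadj : a + k < n → G.Adj (w a) (w (a + k + 1))) (hend : a + k = n → w a = w n) :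
    ∃ v, G.IsWalkVia C (n - k) v ∧ v 0 = w 0 ∧ v (n - k) = w n := by
  refine ⟨fun r => if r ≤ a then w r else w (r + k), ⟨fun r hr => ?_, fun r hr0 hr => ?_⟩,
    if_pos (Nat.zero_le a), ?_⟩
  · dsimp only
    split_ifs with h₁ h₂ h₂
    · exact hw.1 r (by omega)
    · obtain rfl : r = a := by omega
      rw [show r + 1 + k = r + k + 1 by omega]
      exact hadj (by omega)
    · omega
    · rw [show r + 1 + k = r + k + 1 by omega]
      exact hw.1 _ (by omega)
  · dsimp only
    split_ifs
    · exact hw.2 r hr0 (by omega)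
    · exact hw.2 (r + k) (by omega) (by omega)
  · dsimp only
    split_ifs
    · rw [show n - k = a by omega]
      exact hend (by omega)
    · rw [Nat.sub_add_cancel (by omega)]

/-- A shortest walk is chordless: a chord or a repeated vertex would give a shortcut. -/
theorem IsWalkVia.exists_isChordlessWalk (hw : G.IsWalkVia C n w) :
    ∃ n' w', G.IsWalkVia C n' w' ∧ G.IsChordlessWalk n' w' ∧ w' 0 = w 0 ∧ w' n' = w n := by
  classical
  have hex : ∃ n' w', G.IsWalkVia C n' w' ∧ w' 0 = w 0 ∧ w' n' = w n :=
    ⟨n, w, hw, rfl, rfl⟩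
  obtain ⟨w', hw', h0, hn⟩ := Nat.find_spec hex
  refine ⟨_, w', hw', fun a b hab hb hrel => ?_, h0, hn⟩
  by_contra hb'
  obtain ⟨k, hk, v, hv, hv0, hvn⟩ : ∃ k, 0 < k ∧ ∃ v, G.IsWalkVia C (Nat.find hex - k) v ∧
      v 0 = w' 0 ∧ v (Nat.find hex - k) = w' (Nat.find hex) := by
    rcases hrel with heq | hadj
    · refine ⟨b - a, by omega,
        hw'.shortcut (a := a) (k := b - a) (by omega) (fun _ => ?_) fun hbn => ?_⟩
      · rw [heq, show a + (b - a) = b by omega]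
        exact hw'.1 b (by omega)
      · rwa [← hbn, show a + (b - a) = b by omega]
    · refine ⟨b - a - 1, by omega,
        hw'.shortcut (a := a) (k := b - a - 1) (by omega) (fun _ => ?_) fun _ => by omega⟩
      rwa [show a + (b - a - 1) + 1 = b by omega]
  exact Nat.find_min hex (show Nat.find hex - k < Nat.find hex by omega)
    ⟨v, hv, hv0.trans h0, hvn.trans hn⟩

theorem isHole_of_isChordlessWalk {D : Set V} {n' : ℕ} {w' : ℕ → V}
    (hCD : ∀ x ∈ C, ∀ y ∈ D, x ≠ y ∧ ¬ G.Adj x y)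
    (hw : G.IsWalkVia C n w) (hwc : G.IsChordlessWalk n w)
    (hw' : G.IsWalkVia D n' w') (hwc' : G.IsChordlessWalk n' w')
    (h0 : w' 0 = w 0) (hn : w' n' = w n) (hlen : 2 ≤ n) (hlen' : 2 ≤ n') :
    G.IsHole (n + n') fun r => if r ≤ n then w r else w' (n + n' - r) := by
  set v : ℕ → V := fun r => if r ≤ n then w r else w' (n + n' - r)
  have hv : ∀ r ≤ n, v r = w r := fun r hr => if_pos hr
  have hv' : ∀ r, n ≤ r → v r = w' (n + n' - r) := by
    intro r hr
    rcases hr.lt_or_eq with hr | rfl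
    · exact if_neg (by omega)
    · rw [hv _ le_rfl, Nat.add_sub_cancel_left, hn]
  refine ⟨by omega, ?_, fun r hr => ?_, fun a b hab hb hrel => ?_⟩
  · rw [hv' _ (by omega), hv 0 (by omega), Nat.sub_self, h0]
  · rcases lt_or_ge r n with hrn | hrn
    · rw [hv r hrn.le, hv (r + 1) hrn]
      exact hw.1 r hrn
    · rw [hv' r hrn, hv' (r + 1) (by omega)]
      have := hw'.1 (n + n' - (r + 1)) (by omega)
      rw [show n + n' - (r + 1) + 1 = n + n' - r by omega] at this
      exact this.symm
  rcases le_or_gt b n with hbn | hbn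
  · rw [hv a (by omega), hv b hbn] at hrel
    exact Or.inl (hwc a b hab hbn hrel)
  rcases le_or_gt n a with han | han
  · rw [hv' a han, hv' b hbn.le] at hrel
    have := hwc' (n + n' - b) (n + n' - a) (by omega) (by omega) (hrel.imp Eq.symm G.adj_symm)
    omega
  rw [hv a han.le, hv' b hbn.le] at hrel
  rcases Nat.eq_zero_or_pos a with rfl | ha0
  · rw [← h0] at hrel
    have := hwc' 0 (n + n' - b) (by omega) (by omega) hrel
    omega
  · exact absurd hrel (not_or.mpr (hCD _ (hw.2 a ha0 han) _ (hw'.2 _ (by omega) (by omega))))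

end Walks

namespace ReachableIn

variable {X : Finset V} {a b c : V}

theorem symm (h : G.ReachableIn X a b) : G.ReachableIn X b a :=
  Relation.ReflTransGen.mono (fun _ _ h => ⟨h.1.symm, h.2.2, h.2.1⟩) _ _
    (Relation.reflTransGen_swap.mpr h)

theorem trans (hab : G.ReachableIn X a b) (hbc : G.ReachableIn X b c) : G.ReachableIn X a c :=
  Relation.ReflTransGen.trans hab hbc

theorem tail (hab : G.ReachableIn X a b) (hbc : G.Adj b c) (hb : b ∈ X) (hc : c ∈ X) :
    G.ReachableIn X a c :=
  Relation.ReflTransGen.tail hab ⟨hbc, hb, hc⟩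

theorem mem (h : G.ReachableIn X a b) (ha : a ∈ X) : b ∈ X := by
  induction h with
  | refl => exact ha
  | tail _ hst _ => exact hst.2.2

theorem exists_isWalkVia {C : Set V} {s : V} (h : G.ReachableIn X a b)
    (hC : ∀ z, G.ReachableIn X a z → z ∈ C) (hs : G.Adj s a) :
    ∃ n w, G.IsWalkVia C (n + 1) w ∧ w 0 = s ∧ w (n + 1) = b := by
  induction h with
  | refl =>
    have hconst : G.IsWalkVia C 0 fun _ => s := ⟨by omega, by omega⟩
    exact ⟨0, _, hconst.snoc (by omega) hs, by simp, by simp⟩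
  | @tail b c hab hbc ih =>
    obtain ⟨n, w, hw, h0, hn⟩ := ih
    exact ⟨n + 1, _, hw.snoc (fun _ => hn ▸ hC b hab) (hn ▸ hbc.1), by simp [h0], by simp⟩

end ReachableIn

section Separators

variable [DecidableEq V] {W S : Finset V} {a b s t : V}

theorem exists_adj_of_reachableIn_erase (ha : a ∈ W \ S) (hsep : ¬ G.ReachableIn (W \ S) a b)
    (h : G.ReachableIn (W \ S.erase s) a b) : ∃ x, G.ReachableIn (W \ S) a x ∧ G.Adj x s := by
  obtain ⟨x, y, ⟨hxy, -, hy⟩, hax, hay⟩ :=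
    Relation.ReflTransGen.exists_rel_of_not (p := G.ReachableIn (W \ S) a) h .refl hsep
  refine ⟨x, hax, ?_⟩
  obtain rfl : y = s := by
    by_contra hys
    rw [Finset.mem_sdiff, Finset.mem_erase, not_and] at hy
    exact hay (hax.tail hxy (hax.mem ha) (Finset.mem_sdiff.mpr ⟨hy.1, hy.2 hys⟩))
  exact hxy

theorem exists_isChordlessWalk_component (ha : a ∈ W \ S) (hsep : ¬ G.ReachableIn (W \ S) a b)
    (hs : G.ReachableIn (W \ S.erase s) a b) (ht : G.ReachableIn (W \ S.erase t) a b)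
    (hst : s ≠ t) (hnadj : ¬ G.Adj s t) :
    ∃ n w, G.IsWalkVia {z | G.ReachableIn (W \ S) a z} n w ∧ G.IsChordlessWalk n w ∧
      w 0 = s ∧ w n = t ∧ 2 ≤ n := by
  obtain ⟨x, hax, hxs⟩ := exists_adj_of_reachableIn_erase ha hsep hs
  obtain ⟨y, hay, hyt⟩ := exists_adj_of_reachableIn_erase ha hsep ht
  obtain ⟨n, w, hw, h0, hn⟩ :=
    (hax.symm.trans hay).exists_isWalkVia (C := {z | G.ReachableIn (W \ S) a z})
      (fun z hz => hax.trans hz) hxs.symm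
  obtain ⟨n', w', hw', hwc', h0', hn'⟩ :=
    (hw.snoc (fun _ => hn ▸ hay) (hn ▸ hyt)).exists_isChordlessWalk
  rw [Function.update_of_ne (by omega), h0] at h0'
  rw [Function.update_self] at hn'
  refine ⟨n', w', hw', hwc', h0', hn', ?_⟩
  by_contra hlen
  interval_cases n'
  · exact hst (h0'.symm.trans hn')
  · exact hnadj (h0' ▸ hn' ▸ hw'.1 0 one_pos)

theorem IsChordal.isClique_of_minimal_separator (hG : G.IsChordal) (ha : a ∈ W \ S)
    (hb : b ∈ W \ S) (hsep : ¬ G.ReachableIn (W \ S) a b)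
    (hmin : ∀ s ∈ S, G.ReachableIn (W \ S.erase s) a b) : G.IsClique S := by
  intro s hs t ht hst
  by_contra hnadj
  obtain ⟨n, w, hw, hwc, h0, hn, hlen⟩ :=
    exists_isChordlessWalk_component ha hsep (hmin s hs) (hmin t ht) hst hnadj
  obtain ⟨n', w', hw', hwc', h0', hn', hlen'⟩ :=
    exists_isChordlessWalk_component hb (fun h => hsep h.symm) (hmin s hs).symm
      (hmin t ht).symm hst hnadj
  refine hG _ _ (isHole_of_isChordlessWalk (fun x hx y hy => ⟨?_, ?_⟩) hw hwc hw' hwc'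
    (h0'.trans h0.symm) (hn'.trans hn.symm) hlen hlen')
  · rintro rfl
    exact hsep (hx.trans hy.symm)
  · intro hxy
    exact hsep ((hx.tail hxy (hx.mem ha) (hy.mem hb)).trans hy.symm)

theorem exists_minimal_separator (ha : a ∈ W) (hb : b ∈ W) (hab : a ≠ b)
    (hnadj : ¬ G.Adj a b) :
    ∃ S ⊆ W, a ∉ S ∧ b ∉ S ∧ ¬ G.ReachableIn (W \ S) a b ∧
      ∀ s ∈ S, G.ReachableIn (W \ S.erase s) a b := by
  classical
  have hsep : ¬ G.ReachableIn (W \ (W \ {a, b})) a b := by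
    intro h
    rcases Relation.ReflTransGen.cases_head h with rfl | ⟨c, ⟨hac, -, hc⟩, -⟩
    · exact hab rfl
    · have : c = a ∨ c = b := by simp_all
      rcases this with rfl | rfl
      · exact hac.ne rfl
      · exact hnadj hac
  obtain ⟨S, hS, hmin⟩ := ((W \ {a, b}).powerset.filter
    fun S => ¬ G.ReachableIn (W \ S) a b).exists_min_image Finset.card
      ⟨W \ {a, b}, by simpa using hsep⟩
  simp only [Finset.mem_filter, Finset.mem_powerset] at hS hmin
  refine ⟨S, fun x hx => (Finset.mem_sdiff.mp (hS.1 hx)).1, fun h => by simpa using hS.1 h,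
    fun h => by simpa using hS.1 h, hS.2, fun s hs => ?_⟩
  by_contra h
  have := hmin _ ⟨(Finset.erase_subset s S).trans hS.1, h⟩
  rw [Finset.card_erase_of_mem hs] at this
  have := Finset.card_pos.mpr ⟨s, hs⟩
  omega

theorem exists_isSimplicialIn_of_closed {C : Finset V} (hS : G.IsClique S) (hC : C.Nonempty)
    (hclosed : ∀ z ∈ C, ∀ y ∈ W, G.Adj z y → y ∈ C ∪ S)
    (h : G.IsClique (C ∪ S : Finset V) ∨ ∃ u ∈ C ∪ S, ∃ v ∈ C ∪ S, u ≠ v ∧ ¬ G.Adj u v ∧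
      G.IsSimplicialIn (C ∪ S : Finset V) u ∧ G.IsSimplicialIn (C ∪ S : Finset V) v) :
    ∃ u ∈ C, G.IsSimplicialIn W u := by
  have hlift : ∀ u ∈ C, G.IsSimplicialIn (C ∪ S : Finset V) u → G.IsSimplicialIn W u :=
    fun u hu hsimp => hsimp.of_subset fun y hy huy => Finset.mem_coe.mpr (hclosed u hu y hy huy)
  rcases h with hclique | ⟨u, hu, v, hv, huv, hnadj, hsu, hsv⟩
  · obtain ⟨c, hc⟩ := hC
    exact ⟨c, hc, hlift c hc (hclique.subset Set.inter_subset_left)⟩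
  rw [Finset.mem_union] at hu hv
  rcases hu with hu | hu
  · exact ⟨u, hu, hlift u hu hsu⟩
  rcases hv with hv | hv
  · exact ⟨v, hv, hlift v hv hsv⟩
  exact absurd (hS hu hv huv) hnadj

theorem exists_isSimplicialIn_component (hS : G.IsClique S) (hSW : S ⊆ W) (ha : a ∈ W \ S)
    (hb : b ∈ W \ S) (hsep : ¬ G.ReachableIn (W \ S) a b)
    (ih : ∀ W' ⊂ W, G.IsClique (W' : Set V) ∨ ∃ u ∈ W', ∃ v ∈ W', u ≠ v ∧ ¬ G.Adj u v ∧
      G.IsSimplicialIn W' u ∧ G.IsSimplicialIn W' v) :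
    ∃ u, G.ReachableIn (W \ S) a u ∧ G.IsSimplicialIn W u := by
  classical
  set C := (W \ S).filter (G.ReachableIn (W \ S) a)
  have hclosed : ∀ z ∈ C, ∀ y ∈ W, G.Adj z y → y ∈ C ∪ S := by
    intro z hz y hy hzy
    by_cases hyS : y ∈ S
    · exact Finset.mem_union_right _ hyS
    have hy' : y ∈ W \ S := Finset.mem_sdiff.mpr ⟨hy, hyS⟩
    rw [Finset.mem_filter] at hz
    exact Finset.mem_union_left _ (Finset.mem_filter.mpr ⟨hy', hz.2.tail hzy hz.1 hy'⟩)
  have hsub : C ∪ S ⊂ W := by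
    refine Finset.ssubset_iff_of_subset (Finset.union_subset ?_ hSW) |>.mpr ⟨b, ?_, ?_⟩
    · exact fun z hz => (Finset.mem_sdiff.mp (Finset.mem_filter.mp hz).1).1
    · exact (Finset.mem_sdiff.mp hb).1
    · simp [C, hsep, (Finset.mem_sdiff.mp hb).2]
  obtain ⟨u, hu, hsimp⟩ := exists_isSimplicialIn_of_closed hS
    ⟨a, Finset.mem_filter.mpr ⟨ha, .refl⟩⟩ hclosed (ih _ hsub)
  exact ⟨u, (Finset.mem_filter.mp hu).2, hsimp⟩

end Separators

/-- Dirac's theorem. The induction splits `W` along a minimal separator of two non-adjacent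
vertices, which chordality makes a clique. -/
theorem IsChordal.isClique_or_exists_isSimplicialIn (hG : G.IsChordal) (W : Finset V) :
    G.IsClique W ∨ ∃ u ∈ W, ∃ v ∈ W, u ≠ v ∧ ¬ G.Adj u v ∧
      G.IsSimplicialIn W u ∧ G.IsSimplicialIn W v := by
  classical
  induction W using Finset.strongInduction with
  | H W ih =>
  by_cases hW : G.IsClique W
  · exact Or.inl hW
  obtain ⟨a, ha, b, hb, hab, hnadj⟩ : ∃ a ∈ W, ∃ b ∈ W, a ≠ b ∧ ¬ G.Adj a b := by
    simpa [IsClique, Set.Pairwise] using hW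
  obtain ⟨S, hSW, haS, hbS, hsep, hmin⟩ := exists_minimal_separator ha hb hab hnadj
  have ha' : a ∈ W \ S := Finset.mem_sdiff.mpr ⟨ha, haS⟩
  have hb' : b ∈ W \ S := Finset.mem_sdiff.mpr ⟨hb, hbS⟩
  have hS := hG.isClique_of_minimal_separator ha' hb' hsep hmin
  obtain ⟨u, hau, hu⟩ := exists_isSimplicialIn_component hS hSW ha' hb' hsep ih
  obtain ⟨v, hbv, hv⟩ := exists_isSimplicialIn_component hS hSW hb' ha' (fun h => hsep h.symm) ih
  refine Or.inr ⟨u, (Finset.mem_sdiff.mp (hau.mem ha')).1, v,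
    (Finset.mem_sdiff.mp (hbv.mem hb')).1, ?_, fun huv => ?_, hu, hv⟩
  · rintro rfl
    exact hsep (hau.trans hbv.symm)
  · exact hsep ((hau.tail huv (hau.mem ha') (hbv.mem hb')).trans hbv.symm)

end SimpleGraph

namespace BPO

variable {N : Type*}

def twoSection (E : Finset (Finset N)) : SimpleGraph N where
  Adj x y := x ≠ y ∧ ∃ e ∈ E, x ∈ e ∧ y ∈ e
  symm := ⟨fun _ _ h => ⟨h.1.symm, h.2.imp fun _ h => ⟨h.1, h.2.2, h.2.1⟩⟩⟩
  loopless := ⟨fun _ h => h.1 rfl⟩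

variable [DecidableEq N]

def IsConformal (E : Finset (Finset N)) : Prop :=
  ∀ K : Finset N, K.Nonempty → K ⊆ E.sup id → (twoSection E).IsClique K → ∃ e ∈ E, K ⊆ e

inductive EarDecomposable : Finset (Finset N) → Prop
  | empty : EarDecomposable ∅
  | singleton (e : Finset N) : EarDecomposable {e}
  | addEar {F : Finset (Finset N)} {e g : Finset N} (hF : EarDecomposable F) (he : e ∉ F)
      (hg : g ∈ F) (hear : e ∩ F.sup id ⊆ g) : EarDecomposable (insert e F)

section RunningIntersection

theorem foldr_union_eq_sup (L : List (Finset N)) : L.foldr (· ∪ ·) ∅ = L.toFinset.sup id := by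
  induction L with
  | nil => rfl
  | cons e L ih => simp [ih]

def IsRunningOrder (L : List (Finset N)) : Prop :=
  ∀ k, 0 < k → k < L.length →
    ∃ j < k, L.getD k ∅ ∩ (L.take k).foldr (· ∪ ·) ∅ ⊆ L.getD j ∅

theorem isRunningOrder_append_singleton {L : List (Finset N)} {e : Finset N} :
    IsRunningOrder (L ++ [e]) ↔
      IsRunningOrder L ∧ (L ≠ [] → ∃ g ∈ L, e ∩ L.toFinset.sup id ⊆ g) := by
  have hprefix : ∀ k < L.length, ∀ j < k,
      ((L ++ [e]).getD k ∅ ∩ ((L ++ [e]).take k).foldr (· ∪ ·) ∅ ⊆ (L ++ [e]).getD j ∅ ↔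
        L.getD k ∅ ∩ (L.take k).foldr (· ∪ ·) ∅ ⊆ L.getD j ∅) := by
    intro k hk j hj
    rw [List.getD_append _ _ _ _ hk, List.take_append_of_le_length hk.le,
      List.getD_append _ _ _ _ (hj.trans hk)]
  have hlast : ∀ j (hj : j < L.length),
      ((L ++ [e]).getD L.length ∅ ∩ ((L ++ [e]).take L.length).foldr (· ∪ ·) ∅ ⊆
        (L ++ [e]).getD j ∅ ↔ e ∩ L.toFinset.sup id ⊆ L[j]) := by
    intro j hj
    rw [List.getD_append_right _ _ _ _ le_rfl, List.take_append_of_le_length le_rfl,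
      List.take_length, List.getD_append _ _ _ _ hj, List.getD_eq_getElem _ _ hj,
      foldr_union_eq_sup]
    simp
  constructor
  · intro h
    refine ⟨fun k hk hkL => ?_, fun hL => ?_⟩
    · obtain ⟨j, hj, hsub⟩ := h k hk (by simp; omega)
      exact ⟨j, hj, (hprefix k hkL j hj).mp hsub⟩
    · obtain ⟨j, hj, hsub⟩ := h L.length (List.length_pos_iff.mpr hL) (by simp)
      exact ⟨L[j], List.getElem_mem hj, (hlast j hj).mp hsub⟩
  · rintro ⟨hL, hear⟩ k hk hkL
    rw [List.length_append, List.length_singleton] at hkL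
    rcases Nat.lt_succ_iff_lt_or_eq.mp hkL with hkL | rfl
    · obtain ⟨j, hj, hsub⟩ := hL k hk hkL
      exact ⟨j, hj, (hprefix k hkL j hj).mpr hsub⟩
    · obtain ⟨g, hg, hsub⟩ := hear (List.length_pos_iff.mp hk)
      obtain ⟨j, hj, rfl⟩ := List.getElem_of_mem hg
      exact ⟨j, hj, (hlast j hj).mpr hsub⟩

theorem earDecomposable_iff_runningIntersection {E : Finset (Finset N)} :
    EarDecomposable E ↔ RunningIntersection E := by
  constructor
  · intro h
    induction h with
    | empty => exact ⟨[], List.nodup_nil, rfl, fun k hk hkL => by simp at hkL⟩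
    | singleton e =>
      exact ⟨[e], List.nodup_singleton e, rfl, fun k hk hkL => by simp at hkL; omega⟩
    | @addEar F e g _ he hg hear ih =>
      obtain ⟨L, hnd, rfl, hL⟩ := ih
      refine ⟨L ++ [e], ?_, by ext; simp, isRunningOrder_append_singleton.mpr
        ⟨hL, fun _ => ⟨g, List.mem_toFinset.mp hg, hear⟩⟩⟩
      exact hnd.append (List.nodup_singleton e) (by simpa using he)
  · rintro ⟨L, hnd, rfl, hL⟩
    induction L using List.reverseRecOn with
    | nil => exact .empty
    | append_singleton L e ih =>
      rw [List.nodup_append] at hnd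
      obtain ⟨hL, hear⟩ := isRunningOrder_append_singleton.mp hL
      have hE : (L ++ [e]).toFinset = insert e L.toFinset := by ext; simp
      rw [hE]
      rcases eq_or_ne L [] with rfl | hL0
      · exact .singleton e
      · obtain ⟨g, hg, hsub⟩ := hear hL0
        exact .addEar (ih hnd.1 hL) (fun h => by simpa using hnd.2.2 _ (List.mem_toFinset.mp h) e)
          (List.mem_toFinset.mpr hg) hsub

end RunningIntersection

section SimpleCycles

def cycNext (ℓ i : ℕ) : ℕ := if i = ℓ then 1 else i + 1

theorem cycS_eq (c : ℕ → Finset N) (ℓ i : ℕ) : cycS c ℓ i = c i ∩ c (cycNext ℓ i) := rfl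

theorem cycNext_self {ℓ : ℕ} : cycNext ℓ ℓ = 1 := if_pos rfl

theorem cycNext_of_lt {ℓ i : ℕ} (h : i < ℓ) : cycNext ℓ i = i + 1 := if_neg h.ne

theorem cycNext_mem {ℓ i : ℕ} (h1 : 1 ≤ i) (h2 : i ≤ ℓ) :
    1 ≤ cycNext ℓ i ∧ cycNext ℓ i ≤ ℓ := by
  unfold cycNext
  split <;> omega

namespace IsSimpleCycle

variable {E : Finset (Finset N)} {ℓ : ℕ} {c : ℕ → Finset N}

theorem not_subset (hC : IsSimpleCycle E ℓ c) {i j k : ℕ} (hi : 1 ≤ i) (hij : i < j)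
    (hjk : j < k) (hk : k ≤ ℓ) {e : Finset N} (he : e ∈ E) (hie : cycS c ℓ i ⊆ e)
    (hje : cycS c ℓ j ⊆ e) (hke : cycS c ℓ k ⊆ e) : False := by
  obtain ⟨x, hx⟩ := hC.2.2 i j k hi hij hjk hk e he
  rw [mem_sdiff, mem_union, mem_union] at hx
  rcases hx with ⟨(hx | hx) | hx, hxe⟩
  exacts [hxe (hie hx), hxe (hje hx), hxe (hke hx)]

/-- If `e_i = e_{i+1}`, then `s_{i-1}`, `s_i` and `s_{i+1}` all lie in `e_i`. -/
theorem ne_cycNext (hC : IsSimpleCycle E ℓ c) {i : ℕ} (h1 : 1 ≤ i) (h2 : i ≤ ℓ) :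
    c i ≠ c (cycNext ℓ i) := by
  intro heq
  have hℓ := hC.1
  have hsub : ∀ t, (cycNext ℓ t = i ∨ t = i ∨ t = cycNext ℓ i) → cycS c ℓ t ⊆ c i := by
    rintro t (ht | rfl | rfl)
    · exact ht ▸ inter_subset_right
    · exact inter_subset_left
    · exact heq ▸ inter_subset_left
  have he := hC.2.1 i h1 h2
  rcases eq_or_ne i 1 with rfl | hi1
  · exact hC.not_subset le_rfl one_lt_two (by omega) le_rfl he (hsub 1 (.inr (.inl rfl)))
      (hsub 2 (.inr (.inr (cycNext_of_lt (by omega)).symm))) (hsub ℓ (.inl cycNext_self))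
  rcases eq_or_ne i ℓ with rfl | hiℓ
  · exact hC.not_subset le_rfl (show 1 < i - 1 by omega) (by omega) le_rfl he
      (hsub 1 (.inr (.inr cycNext_self.symm)))
      (hsub (i - 1) (.inl (by rw [cycNext_of_lt (by omega)]; omega))) (hsub i (.inr (.inl rfl)))
  · exact hC.not_subset (show 1 ≤ i - 1 by omega) (show i - 1 < i by omega) (lt_add_one i)
      (by omega) he (hsub (i - 1) (.inl (by rw [cycNext_of_lt (by omega)]; omega)))
      (hsub i (.inr (.inl rfl))) (hsub (i + 1) (.inr (.inr (cycNext_of_lt (by omega)).symm)))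

/-- Putting `g` in place of the ear `e` only enlarges the sets `s_t`. -/
theorem replace_ear {F : Finset (Finset N)} {e g : Finset N}
    (hC : IsSimpleCycle (insert e F) ℓ c) (hg : g ∈ F) (hear : e ∩ F.sup id ⊆ g) :
    IsSimpleCycle F ℓ fun i => if c i = e then g else c i := by
  set c' : ℕ → Finset N := fun i => if c i = e then g else c i
  have hmem : ∀ t, 1 ≤ t → t ≤ ℓ → c t ≠ e → c t ∈ F :=
    fun t h1 h2 hte => (mem_insert.mp (hC.2.1 t h1 h2)).resolve_left hte
  have hkeep : ∀ u v x, 1 ≤ u → u ≤ ℓ → 1 ≤ v → v ≤ ℓ → c u ≠ c v → x ∈ c u → x ∈ c v →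
      x ∈ c' u := by
    intro u v x hu1 hu2 hv1 hv2 huv hxu hxv
    simp only [c']
    split_ifs with hue
    · refine hear (mem_inter.mpr ⟨hue ▸ hxu, mem_sup.mpr ⟨c v, ?_, hxv⟩⟩)
      exact hmem v hv1 hv2 fun hve => huv (hue.trans hve.symm)
    · exact hxu
  have hsub : ∀ t, 1 ≤ t → t ≤ ℓ → cycS c ℓ t ⊆ cycS c' ℓ t := by
    intro t h1 h2 x hx
    obtain ⟨hn1, hn2⟩ := cycNext_mem h1 h2
    rw [cycS_eq, mem_inter] at hx ⊢
    exact ⟨hkeep _ _ x h1 h2 hn1 hn2 (hC.ne_cycNext h1 h2) hx.1 hx.2,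
      hkeep _ _ x hn1 hn2 h1 h2 (hC.ne_cycNext h1 h2).symm hx.2 hx.1⟩
  refine ⟨hC.1, fun t h1 h2 => ?_, fun i j k hi hij hjk hk f hf => ?_⟩
  · by_cases hte : c t = e
    · simp only [c', if_pos hte, hg]
    · simp only [c', if_neg hte, hmem t h1 h2 hte]
  · refine (hC.2.2 i j k hi hij hjk hk f (mem_insert_of_mem hf)).mono
      (sdiff_subset_sdiff (union_subset_union (union_subset_union ?_ ?_) ?_) le_rfl)
    exacts [hsub i hi (by omega), hsub j (by omega) (by omega), hsub k (by omega) hk]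

end IsSimpleCycle

theorem EarDecomposable.not_exists_isSimpleCycle {E : Finset (Finset N)}
    (h : EarDecomposable E) : ¬ ∃ ℓ c, IsSimpleCycle E ℓ c := by
  induction h with
  | empty =>
    rintro ⟨ℓ, c, hC⟩
    simpa using hC.2.1 1 le_rfl (by have := hC.1; omega)
  | singleton e =>
    rintro ⟨ℓ, c, hC⟩
    have hℓ := hC.1
    obtain ⟨hn1, hn2⟩ := cycNext_mem (ℓ := ℓ) le_rfl (by omega)
    exact hC.ne_cycNext le_rfl (by omega) <|
      (mem_singleton.mp (hC.2.1 1 le_rfl (by omega))).trans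
        (mem_singleton.mp (hC.2.1 _ hn1 hn2)).symm
  | addEar _ _ hg hear ih =>
    rintro ⟨ℓ, c, hC⟩
    exact ih ⟨ℓ, _, hC.replace_ear hg hear⟩

/-- The edges of the cycle are chosen through the pairs `v (i - 1), v i` of consecutive vertices
of the hole. -/
theorem exists_isSimpleCycle_of_isHole {E : Finset (Finset N)} {m : ℕ} {v : ℕ → N}
    (h : (twoSection E).IsHole m v) : ∃ ℓ c, IsSimpleCycle E ℓ c := by
  obtain ⟨hm, hvm, hadj, hchord⟩ := h
  have hedge : ∀ i, ∃ e : Finset N, 1 ≤ i → i ≤ m → e ∈ E ∧ v (i - 1) ∈ e ∧ v i ∈ e := by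
    intro i
    by_cases hi : 1 ≤ i ∧ i ≤ m
    · obtain ⟨-, e, he, h1, h2⟩ := hadj (i - 1) (by omega)
      exact ⟨e, fun _ _ => ⟨he, h1, by rwa [Nat.sub_add_cancel hi.1] at h2⟩⟩
    · exact ⟨∅, fun h1 h2 => absurd ⟨h1, h2⟩ hi⟩
  choose c hc using hedge
  refine ⟨m, c, by omega, fun i h1 h2 => (hc i h1 h2).1, fun i j k hi hij hjk hk f hf => ?_⟩
  by_contra hempty
  rw [not_nonempty_iff_eq_empty, sdiff_eq_empty_iff_subset] at hempty
  have hvf : ∀ t, 1 ≤ t → t ≤ m → cycS c m t ⊆ f → v t ∈ f := by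
    intro t h1 h2 hsub
    refine hsub ?_
    rw [cycS_eq, mem_inter]
    refine ⟨(hc t h1 h2).2.2, ?_⟩
    rcases h2.lt_or_eq with h2 | rfl
    · simpa [cycNext_of_lt h2] using (hc (t + 1) (by omega) (by omega)).2.1
    · simpa [cycNext_self, hvm] using (hc 1 le_rfl (by omega)).2.1
  have hcons : ∀ p q, 1 ≤ p → p < q → q ≤ m → v p ∈ f → v q ∈ f →
      q = p + 1 ∨ (p = 1 ∧ q = m) := by
    intro p q hp hpq hq hpf hqf
    have hrel : v p = v q ∨ (twoSection E).Adj (v p) (v q) := by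
      by_cases hpq' : v p = v q
      · exact .inl hpq'
      · exact .inr ⟨hpq', f, hf, hpf, hqf⟩
    rcases hq.lt_or_eq with hq | rfl
    · have := hchord p q hpq hq hrel
      omega
    · rw [hvm] at hrel
      have := hchord 0 p hp (by omega) (hrel.imp Eq.symm (twoSection E).adj_symm)
      omega
  have hi' := hvf i hi (by omega) fun x hx => hempty (by simp [hx])
  have hj' := hvf j (by omega) (by omega) fun x hx => hempty (by simp [hx])
  have hk' := hvf k (by omega) hk fun x hx => hempty (by simp [hx])
  have := hcons i j hi hij (by omega) hi' hj'
  have := hcons j k (by omega) hjk hk hj' hk'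
  have := hcons i k hi (by omega) hk hi' hk'
  omega

/-- The cycle is the triangle of the edges covering `K.erase x`, `K.erase y` and `K.erase z`. -/
theorem exists_isSimpleCycle_of_erase_subset {E : Finset (Finset N)} {K : Finset N} {x y z : N}
    (hx : x ∈ K) (hy : y ∈ K) (hz : z ∈ K) (hxy : x ≠ y) (hxz : x ≠ z) (hyz : y ≠ z)
    (hcov : ∀ u ∈ K, ∃ e ∈ E, K.erase u ⊆ e) (hK : ∀ e ∈ E, ¬ K ⊆ e) :
    ∃ ℓ c, IsSimpleCycle E ℓ c := by
  obtain ⟨ex, hex, hKX⟩ := hcov x hx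
  obtain ⟨ey, hey, hKY⟩ := hcov y hy
  obtain ⟨ez, hez, hKZ⟩ := hcov z hz
  have hmem : ∀ {u e}, K.erase u ⊆ e → ∀ a ∈ K, a ≠ u → a ∈ e :=
    fun hsub a ha hau => hsub (mem_erase.mpr ⟨hau, ha⟩)
  refine ⟨3, fun i => if i = 1 then ex else if i = 2 then ey else ez, le_rfl, fun i h1 h2 => ?_,
    fun i j k hi hij hjk hk f hf => ?_⟩
  · interval_cases i <;> simp [hex, hey, hez]
  obtain ⟨rfl, rfl, rfl⟩ : i = 1 ∧ j = 2 ∧ k = 3 := by omega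
  by_contra hempty
  rw [not_nonempty_iff_eq_empty, sdiff_eq_empty_iff_subset] at hempty
  refine hK f hf fun a ha => hempty ?_
  simp only [cycS, mem_union, mem_inter]
  norm_num
  by_cases hax : a = x
  · subst hax
    exact .inl (.inr ⟨hmem hKY a ha hxy, hmem hKZ a ha hxz⟩)
  by_cases hay : a = y
  · subst hay
    exact .inr ⟨hmem hKZ a ha hyz, hmem hKX a ha hax⟩
  · exact .inl (.inl ⟨hmem hKX a ha hax, hmem hKY a ha hay⟩)

theorem two_lt_card_of_forall_not_subset {E : Finset (Finset N)} {K : Finset N}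
    (hKne : K.Nonempty) (hKV : K ⊆ E.sup id) (hKcl : (twoSection E).IsClique K)
    (hKunc : ∀ e ∈ E, ¬ K ⊆ e) : 2 < K.card := by
  by_contra hle
  obtain ⟨u, hu⟩ := hKne
  rcases (K.erase u).eq_empty_or_nonempty with hemp | ⟨w, hw⟩
  · obtain ⟨f, hf, huf⟩ := mem_sup.mp (hKV hu)
    refine hKunc f hf fun a ha => ?_
    by_cases hau : a = u
    · exact hau ▸ huf
    · exact absurd (hemp ▸ mem_erase.mpr ⟨hau, ha⟩) (notMem_empty a)
  · obtain ⟨hwu, hwK⟩ := mem_erase.mp hw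
    obtain ⟨-, f, hf, huf, hwf⟩ := hKcl hu hwK (Ne.symm hwu)
    have hK2 : K = {u, w} := by
      refine (eq_of_subset_of_card_le (by simp [insert_subset_iff, hu, hwK]) ?_).symm
      rw [card_pair (Ne.symm hwu)]
      omega
    exact hKunc f hf (hK2 ▸ by simp [insert_subset_iff, huf, hwf])

/-- A minimal clique not covered by an edge has at least three vertices, and it is covered as
soon as any one of them is removed. -/
theorem exists_isSimpleCycle_of_not_isConformal {E : Finset (Finset N)} (h : ¬ IsConformal E) :
    ∃ ℓ c, IsSimpleCycle E ℓ c := by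
  classical
  obtain ⟨K₀, hK₀⟩ : ∃ K : Finset N, K.Nonempty ∧ K ⊆ E.sup id ∧
      (twoSection E).IsClique K ∧ ∀ e ∈ E, ¬ K ⊆ e := by
    simpa [IsConformal] using h
  obtain ⟨K, hK, hmin⟩ := ((E.sup id).powerset.filter fun K : Finset N => K.Nonempty ∧
    (twoSection E).IsClique (K : Set N) ∧ ∀ e ∈ E, ¬ K ⊆ e).exists_min_image card
      ⟨K₀, by simpa [hK₀.2.1] using ⟨hK₀.1, hK₀.2.2⟩⟩
  simp only [mem_filter, mem_powerset] at hK hmin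
  obtain ⟨hKV, hKne, hKcl, hKunc⟩ := hK
  have hcov : ∀ u ∈ K, ∃ e ∈ E, K.erase u ⊆ e := by
    intro u hu
    by_contra hno
    push Not at hno
    rcases (K.erase u).eq_empty_or_nonempty with hemp | hne
    · obtain ⟨e, he, -⟩ := mem_sup.mp (hKV hu)
      exact hno e he (hemp ▸ empty_subset e)
    · have := hmin _ ⟨(erase_subset u K).trans hKV, hne, hKcl.subset (by simp), hno⟩
      rw [card_erase_of_mem hu] at this
      have := card_pos.mpr hKne
      omega
  have hK3 := two_lt_card_of_forall_not_subset hKne hKV hKcl hKunc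
  obtain ⟨x, y, z, hx, hy, hz, hxy, hxz, hyz⟩ := two_lt_card_iff.mp hK3
  exact exists_isSimpleCycle_of_erase_subset hx hy hz hxy hxz hyz hcov hKunc

end SimpleCycles

section Reduction

variable {E : Finset (Finset N)}

theorem sup_erase_of_subset {e f : Finset N} (hf : f ∈ E) (hef : e ≠ f) (hsub : e ⊆ f) :
    (E.erase e).sup id = E.sup id := by
  refine le_antisymm (sup_mono (erase_subset e E)) (Finset.sup_le fun g hg => ?_)
  rcases eq_or_ne g e with rfl | hge
  · exact hsub.trans (le_sup (f := id) (mem_erase.mpr ⟨hef.symm, hf⟩))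
  · exact le_sup (f := id) (mem_erase.mpr ⟨hge, hg⟩)

theorem twoSection_erase_of_subset {e f : Finset N} (hf : f ∈ E) (hef : e ≠ f)
    (hsub : e ⊆ f) : twoSection (E.erase e) = twoSection E := by
  ext x y
  refine and_congr_right fun _ => ⟨fun ⟨g, hg, hxy⟩ => ⟨g, mem_of_mem_erase hg, hxy⟩,
    fun ⟨g, hg, hx, hy⟩ => ?_⟩
  rcases eq_or_ne g e with rfl | hge
  · exact ⟨f, mem_erase.mpr ⟨hef.symm, hf⟩, hsub hx, hsub hy⟩
  · exact ⟨g, mem_erase.mpr ⟨hge, hg⟩, hx, hy⟩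

theorem IsConformal.erase_of_subset {e f : Finset N} (hE : IsConformal E) (hf : f ∈ E)
    (hef : e ≠ f) (hsub : e ⊆ f) : IsConformal (E.erase e) := by
  intro K hK hKV hKcl
  rw [sup_erase_of_subset hf hef hsub] at hKV
  rw [twoSection_erase_of_subset hf hef hsub] at hKcl
  obtain ⟨g, hg, hKg⟩ := hE K hK hKV hKcl
  rcases eq_or_ne g e with rfl | hge
  · exact ⟨f, mem_erase.mpr ⟨hef.symm, hf⟩, hKg.trans hsub⟩
  · exact ⟨g, mem_erase.mpr ⟨hge, hg⟩, hKg⟩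

theorem twoSection_image_erase_adj {u x y : N} :
    (twoSection (E.image (·.erase u))).Adj x y ↔
      (twoSection E).Adj x y ∧ x ≠ u ∧ y ≠ u := by
  simp only [twoSection, mem_image, exists_exists_and_eq_and, mem_erase]
  constructor
  · rintro ⟨hxy, e, he, ⟨hxu, hx⟩, ⟨hyu, hy⟩⟩
    exact ⟨⟨hxy, e, he, hx, hy⟩, hxu, hyu⟩
  · rintro ⟨⟨hxy, e, he, hx, hy⟩, hxu, hyu⟩
    exact ⟨hxy, e, he, ⟨hxu, hx⟩, ⟨hyu, hy⟩⟩

theorem IsConformal.image_erase (hE : IsConformal E) (u : N) :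
    IsConformal (E.image (·.erase u)) := by
  intro K hK hKV hKcl
  have hKu : ∀ x ∈ K, x ≠ u ∧ ∃ e ∈ E, x ∈ e := by
    intro x hx
    obtain ⟨e, he, hxu, hxe⟩ : ∃ e ∈ E, x ≠ u ∧ x ∈ e := by simpa using hKV hx
    exact ⟨hxu, e, he, hxe⟩
  obtain ⟨g, hg, hKg⟩ := hE K hK (fun x hx => by simpa using (hKu x hx).2)
    fun x hx y hy hxy => (twoSection_image_erase_adj.mp (hKcl hx hy hxy)).1
  exact ⟨g.erase u, mem_image_of_mem _ hg, fun x hx => mem_erase.mpr ⟨(hKu x hx).1, hKg hx⟩⟩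

/-- Enlarging edges by vertices private to them preserves ear decompositions. -/
theorem EarDecomposable.image {F : Finset (Finset N)} (hF : EarDecomposable F)
    {φ : Finset N → Finset N} (hinj : Set.InjOn φ F) (hle : ∀ e ∈ F, e ⊆ φ e)
    (hpriv : ∀ e ∈ F, ∀ f ∈ F, e ≠ f → Disjoint (φ e \ e) (φ f)) :
    EarDecomposable (F.image φ) := by
  induction hF with
  | empty => exact .empty
  | singleton e => exact .singleton (φ e)
  | @addEar F e g _ he hg hear ih =>
    rw [image_insert]
    have hF : ∀ f ∈ F, f ∈ insert e F := fun f hf => mem_insert_of_mem hf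
    have he' : e ∈ insert e F := mem_insert_self e F
    refine .addEar (ih (hinj.mono fun f hf => hF f hf) (fun f hf => hle f (hF f hf))
      fun f hf f' hf' => hpriv f (hF f hf) f' (hF f' hf')) ?_ (mem_image_of_mem φ hg) ?_
    · rw [mem_image]
      rintro ⟨f, hf, hfe⟩
      exact he (hinj (hF f hf) he' hfe ▸ hf)
    · intro x hx
      obtain ⟨hxe, hxU⟩ := mem_inter.mp hx
      obtain ⟨f, hf, hxf⟩ : ∃ f ∈ F, x ∈ φ f := by simpa using hxU
      have hef : e ≠ f := fun h => he (h ▸ hf)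
      have hxe' : x ∈ e := by_contra fun h =>
        disjoint_left.mp (hpriv e he' f (hF f hf) hef) (mem_sdiff.mpr ⟨hxe, h⟩) hxf
      have hxf' : x ∈ f := by_contra fun h =>
        disjoint_left.mp (hpriv f (hF f hf) e he' hef.symm) (mem_sdiff.mpr ⟨hxf, h⟩) hxe
      exact hle g (hF g hg) (hear (mem_inter.mpr ⟨hxe', mem_sup.mpr ⟨f, hf, hxf'⟩⟩))

/-- Deleting a vertex `u` that lies in the edge `h` only is undone by enlarging `h.erase u` back
to `h`. -/
theorem EarDecomposable.of_image_erase {h : Finset N} {u : N}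
    (hE : EarDecomposable (E.image (·.erase u))) (hh : h ∈ E) (hu : ∀ e ∈ E, u ∈ e ↔ e = h)
    (hsp : ∀ e ∈ E, e ⊆ h → e = h) : EarDecomposable E := by
  set φ : Finset N → Finset N := fun e => if e = h.erase u then h else e
  have huE : ∀ e ∈ E.image (·.erase u), u ∉ e := by simp
  have hhE : h ∉ E.image (·.erase u) := fun hm => huE h hm ((hu h hh).mpr rfl)
  have hφ : ∀ e ∈ E, φ (e.erase u) = e := by
    intro e he
    rcases eq_or_ne e h with rfl | heh
    · exact if_pos rfl
    · have hue : u ∉ e := fun hue => heh ((hu e he).mp hue)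
      rw [erase_eq_of_notMem hue]
      exact if_neg fun h' => heh (hsp e he (h'.le.trans (erase_subset u h)))
  have himage : (E.image (·.erase u)).image φ = E := by
    rw [image_image]
    exact (image_congr (g := id) fun e he => hφ e he).trans image_id
  rw [← himage]
  refine hE.image (fun a ha b hb hab => ?_) (fun e _ => ?_) (fun a ha b hb hab => ?_)
  · simp only [φ] at hab
    split_ifs at hab with h₁ h₂ h₂
    · exact h₁.trans h₂.symm
    · exact absurd (hab ▸ hb) hhE
    · exact absurd (hab ▸ ha) hhE
    · exact hab
  · simp only [φ]
    split_ifs with h₁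
    · exact h₁ ▸ erase_subset u h
    · exact subset_rfl
  · simp only [φ]
    split_ifs with h₁ h₂ h₂
    · exact absurd (h₁.trans h₂.symm) hab
    · refine disjoint_left.mpr fun x hx hxb => huE b hb ?_
      rw [h₁, mem_sdiff, mem_erase] at hx
      obtain rfl : x = u := by_contra fun hxu => hx.2 ⟨hxu, hx.1⟩
      exact hxb
    all_goals rw [sdiff_self]; exact disjoint_empty_left _

/-- A simplicial vertex of the 2-section (Dirac) lies in a single edge. -/
theorem exists_mem_iff_eq_of_isChordal (hE : IsConformal E) (hG : (twoSection E).IsChordal)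
    (hsp : ∀ e ∈ E, ∀ f ∈ E, e ⊆ f → e = f) (hE2 : 1 < E.card) :
    ∃ u, ∃ h ∈ E, ∀ e ∈ E, u ∈ e ↔ e = h := by
  classical
  obtain ⟨e₁, he₁, e₂, he₂, h12⟩ := one_lt_card.mp hE2
  set W := E.sup id
  have hle : ∀ e ∈ E, e ⊆ W := fun e he => le_sup (f := id) he
  have hW : ¬ (twoSection E).IsClique (W : Set N) := by
    intro hcl
    rcases W.eq_empty_or_nonempty with hemp | hne
    · exact h12 (hsp _ he₁ _ he₂ ((hle e₁ he₁).trans (hemp ▸ empty_subset e₂)))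
    · obtain ⟨g, hg, hWg⟩ := hE W hne subset_rfl hcl
      exact h12 ((hsp _ he₁ _ hg ((hle e₁ he₁).trans hWg)).trans
        (hsp _ he₂ _ hg ((hle e₂ he₂).trans hWg)).symm)
  obtain ⟨u, huW, hu⟩ : ∃ u ∈ W, (twoSection E).IsSimplicialIn W u := by
    rcases hG.isClique_or_exists_isSimplicialIn W with h | ⟨u, hu, -, -, -, -, hsu, -⟩
    · exact absurd h hW
    · exact ⟨u, hu, hsu⟩
  set K := insert u (W.filter ((twoSection E).Adj u))
  have hK : (twoSection E).IsClique (K : Set N) := by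
    rw [coe_insert, SimpleGraph.isClique_insert]
    refine ⟨hu.subset fun x hx => ?_, fun x hx _ => (mem_filter.mp hx).2⟩
    simpa using hx
  obtain ⟨h, hh, hKh⟩ := hE K (insert_nonempty _ _) (insert_subset huW (filter_subset _ _)) hK
  refine ⟨u, h, hh, fun e he => ⟨fun hue => hsp e he h hh fun x hx => hKh ?_,
    fun heh => heh ▸ hKh (mem_insert_self _ _)⟩⟩
  rcases eq_or_ne x u with rfl | hxu
  · exact mem_insert_self _ _
  · exact mem_insert_of_mem (mem_filter.mpr ⟨hle e he hx, hxu.symm, e, he, hue, hx⟩)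

end Reduction

theorem EarDecomposable.of_isConformal_of_isChordal {E : Finset (Finset N)} (hE : IsConformal E)
    (hG : (twoSection E).IsChordal) : EarDecomposable E := by
  induction hn : ∑ e ∈ E, (e.card + 1) using Nat.strong_induction_on generalizing E with
  | _ n ih =>
  subst hn
  by_cases hsub : ∃ e ∈ E, ∃ f ∈ E, e ≠ f ∧ e ⊆ f
  · obtain ⟨e, he, f, hf, hef, hsub⟩ := hsub
    rw [← insert_erase he]
    refine .addEar (ih _ (sum_erase_lt_of_pos he (Nat.succ_pos _))
      (hE.erase_of_subset hf hef hsub) ((twoSection_erase_of_subset hf hef hsub).symm ▸ hG) rfl)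
      (notMem_erase e E) (mem_erase.mpr ⟨hef.symm, hf⟩) (inter_subset_left.trans hsub)
  have hsp : ∀ e ∈ E, ∀ f ∈ E, e ⊆ f → e = f :=
    fun e he f hf hef => by_contra fun hne => hsub ⟨e, he, f, hf, hne, hef⟩
  rcases Nat.lt_or_ge 1 E.card with hE2 | hE1
  · obtain ⟨u, h, hh, hu⟩ := exists_mem_iff_eq_of_isChordal hE hG hsp hE2
    have hlt : ∑ g ∈ E.image (·.erase u), (g.card + 1) < ∑ g ∈ E, (g.card + 1) := by
      calc ∑ g ∈ E.image (·.erase u), (g.card + 1) ≤ ∑ g ∈ E, ((g.erase u).card + 1) :=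
            sum_image_le_of_nonneg fun _ _ => Nat.zero_le _
        _ < _ := by
          refine sum_lt_sum (fun g _ => Nat.succ_le_succ card_erase_le) ⟨h, hh, ?_⟩
          exact Nat.succ_lt_succ (card_erase_lt_of_mem ((hu h hh).mpr rfl))
    exact .of_image_erase (ih _ hlt (hE.image_erase u)
      (hG.of_induced {x | x ≠ u} fun _ _ => twoSection_image_erase_adj) rfl) hh hu
      fun e he => hsp e he h hh
  · rcases Nat.le_one_iff_eq_zero_or_eq_one.mp hE1 with h0 | h1
    · exact card_eq_zero.mp h0 ▸ .empty
    · obtain ⟨e, rfl⟩ := card_eq_one.mp h1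
      exact .singleton e

theorem stmt2_general {N : Type*} [DecidableEq N] (E : Finset (Finset N)) :
    AlphaAcyclic E ↔ ¬ ∃ ℓ c, IsSimpleCycle E ℓ c := by
  rw [AlphaAcyclic, ← earDecomposable_iff_runningIntersection]
  refine ⟨EarDecomposable.not_exists_isSimpleCycle, fun h => .of_isConformal_of_isChordal ?_ ?_⟩
  · by_contra hE
    exact h (exists_isSimpleCycle_of_not_isConformal hE)
  · intro m v hv
    exact h (exists_isSimpleCycle_of_isHole hv)

theorem stmt2 {N : Type*} [DecidableEq N] (E : Finset (Finset N))
    (hcard : ∀ e ∈ E, 2 ≤ e.card) :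
    AlphaAcyclic E ↔ ¬ ∃ ℓ c, IsSimpleCycle E ℓ c :=
  stmt2_general E

end BPO
end

section
/- Every simple cycle of a hypergraph G is an α-cycle of G: if C = e_1,…,e_ℓ,e_{ℓ+1} with e_{ℓ+1} = e_1 and ℓ ≥ 3 is a simple cycle of G, then C satisfies conditions (A1) and (A2) and is hence an α-cycle of G. -/
open Finset

namespace BPO

variable {N : Type*} [DecidableEq N]

theorem stmt4 {N : Type*} [DecidableEq N] (E : Finset (Finset N))
    (hcard : ∀ e ∈ E, 2 ≤ e.card) (ℓ : ℕ) (c : ℕ → Finset N)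
    (hC : IsSimpleCycle E ℓ c) :
    IsAlphaCycle E ℓ c := by
  obtain ⟨hℓ, hE, hS⟩ := hC
  -- key: condition (S) for unordered distinct triples
  have key : ∀ a b d, 1 ≤ a → a ≤ ℓ → 1 ≤ b → b ≤ ℓ → 1 ≤ d → d ≤ ℓ →
      a ≠ b → a ≠ d → b ≠ d → ∀ e ∈ E,
      ((cycS c ℓ a ∪ cycS c ℓ b ∪ cycS c ℓ d) \ e).Nonempty := by
    intro a b d ha1 ha2 hb1 hb2 hd1 hd2 hab had hbd e he
    rcases lt_trichotomy a b with h1 | h1 | h1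
    · rcases lt_trichotomy b d with h2 | h2 | h2
      · exact hS a b d ha1 h1 h2 hd2 e he
      · exact absurd h2 hbd
      · rcases lt_trichotomy a d with h3 | h3 | h3
        · exact (hS a d b ha1 h3 h2 hb2 e he).mono
            (by intro x hx; simp only [Finset.mem_sdiff, Finset.mem_union] at hx ⊢; tauto)
        · exact absurd h3 had
        · exact (hS d a b hd1 h3 h1 hb2 e he).mono
            (by intro x hx; simp only [Finset.mem_sdiff, Finset.mem_union] at hx ⊢; tauto)
    · exact absurd h1 hab
    · rcases lt_trichotomy a d with h2 | h2 | h2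
      · exact (hS b a d hb1 h1 h2 hd2 e he).mono
          (by intro x hx; simp only [Finset.mem_sdiff, Finset.mem_union] at hx ⊢; tauto)
      · exact absurd h2 had
      · rcases lt_trichotomy b d with h3 | h3 | h3
        · exact (hS b d a hb1 h3 h2 ha2 e he).mono
            (by intro x hx; simp only [Finset.mem_sdiff, Finset.mem_union] at hx ⊢; tauto)
        · exact absurd h3 hbd
        · exact (hS d b a hd1 h3 h1 ha2 e he).mono
            (by intro x hx; simp only [Finset.mem_sdiff, Finset.mem_union] at hx ⊢; tauto)
  -- predecessor segment is contained in c i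
  have pred_sub : ∀ i, 1 ≤ i → i ≤ ℓ → cycS c ℓ (if i = 1 then ℓ else i - 1) ⊆ c i := by
    intro i hi1 hi2
    by_cases h1 : i = 1
    · subst h1
      simp only [cycS, if_true, eq_self_iff_true]
      exact Finset.inter_subset_right
    · have hne : i - 1 ≠ ℓ := by omega
      have hadd : i - 1 + 1 = i := by omega
      simp only [if_neg h1, cycS, if_neg hne, hadd]
      exact Finset.inter_subset_right
  refine ⟨hℓ, hE, ?_, ?_⟩
  · -- (A1)
    intro i j hi1 hi2 hj1 hj2 hij
    by_contra hne
    rw [Finset.not_nonempty_iff_eq_empty, Finset.sdiff_eq_empty_iff_subset] at hne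
    set a := if i = 1 then ℓ else i - 1 with ha
    set b := if j = 1 then ℓ else j - 1 with hb
    have ha1 : 1 ≤ a ∧ a ≤ ℓ := by rw [ha]; split <;> omega
    have hb1 : 1 ≤ b ∧ b ≤ ℓ := by rw [hb]; split <;> omega
    have hane : a ≠ i := by rw [ha]; split <;> omega
    have hbne : b ≠ j := by rw [hb]; split <;> omega
    have hsub_a : cycS c ℓ a ⊆ c j := by
      rw [ha]; exact (pred_sub i hi1 hi2).trans hne
    have hsub_i : cycS c ℓ i ⊆ c j := Finset.inter_subset_left.trans hne
    have hsub_b : cycS c ℓ b ⊆ c j := by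
      rw [hb]; exact pred_sub j hj1 hj2
    have hsub_j : cycS c ℓ j ⊆ c j := Finset.inter_subset_left
    by_cases hja : j = a
    · -- use triple (b, j, i)
      have hbi : b ≠ i := by
        rw [hb]; rw [ha] at hja
        split_ifs at hja ⊢ <;> omega
      obtain ⟨x, hx⟩ := key b j i hb1.1 hb1.2 hj1 hj2 hi1 hi2 hbne hbi
        (Ne.symm hij) (c j) (hE j hj1 hj2)
      rw [Finset.mem_sdiff] at hx
      rcases Finset.mem_union.1 hx.1 with h | h
      · rcases Finset.mem_union.1 h with h | h
        · exact hx.2 (hsub_b h)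
        · exact hx.2 (hsub_j h)
      · exact hx.2 (hsub_i h)
    · -- use triple (a, i, j)
      have haj : a ≠ j := fun h => hja h.symm
      obtain ⟨x, hx⟩ := key a i j ha1.1 ha1.2 hi1 hi2 hj1 hj2 hane haj hij
        (c j) (hE j hj1 hj2)
      rw [Finset.mem_sdiff] at hx
      rcases Finset.mem_union.1 hx.1 with h | h
      · rcases Finset.mem_union.1 h with h | h
        · exact hx.2 (hsub_a h)
        · exact hx.2 (hsub_i h)
      · exact hx.2 (hsub_j h)
  · -- (A2)
    intro i hi1 hi2 e he
    refine key _ i _ ?_ ?_ hi1 hi2 ?_ ?_ ?_ ?_ ?_ e he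
    · split <;> omega
    · split <;> omega
    · split <;> omega
    · split <;> omega
    · split_ifs <;> omega
    · split_ifs <;> omega
    · split_ifs <;> omega

end BPO
end

section
/- Let G = (V,E) be a hypergraph and let C = e_1,…,e_ℓ,e_{ℓ+1}, with e_{ℓ+1} = e_1 and ℓ ≥ 4, be an α-cycle of G; set s_i := e_i ∩ e_{i+1} for i ∈ [ℓ]. If C is chordless, then (s_i ∪ s_j) \ e ≠ ∅ for all i < j in [ℓ] with j − i > 1 and (i,j) ≠ (1,ℓ), and for all e ∈ E. -/
open Finset

namespace BPO

variable {N : Type*} [DecidableEq N]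

theorem stmt5 {N : Type*} [DecidableEq N] (E : Finset (Finset N))
    (hcard : ∀ e ∈ E, 2 ≤ e.card) (ℓ : ℕ) (c : ℕ → Finset N)
    (hC : IsAlphaCycle E ℓ c) (hl : 4 ≤ ℓ) (hch : Chordless E ℓ c) :
    ∀ i j, 1 ≤ i → i < j → j ≤ ℓ → 1 < j - i → ¬(i = 1 ∧ j = ℓ) →
      ∀ e ∈ E, ((cycS c ℓ i ∪ cycS c ℓ j) \ e).Nonempty := by
  obtain ⟨h3, hmem, hA1, hA2⟩ := hC
  have hsnext : ∀ m, m < ℓ → cycS c ℓ m = c m ∩ c (m + 1) := by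
    intro m hm
    rw [cycS, if_neg (by omega)]
  have hsfst : ∀ m, cycS c ℓ m ⊆ c m := by
    intro m; rw [cycS]; exact Finset.inter_subset_left
  have hssnd : ∀ m, m < ℓ → cycS c ℓ m ⊆ c (m + 1) := by
    intro m hm; rw [hsnext m hm]; exact Finset.inter_subset_right
  have hA2' : ∀ m, 2 ≤ m → m < ℓ → ∀ f ∈ E,
      ¬(cycS c ℓ (m - 1) ∪ cycS c ℓ m ∪ cycS c ℓ (m + 1) ⊆ f) := by
    intro m h2 hml f hf hsub
    have h := hA2 m (by omega) (by omega) f hf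
    rw [if_neg (by omega), if_neg (by omega)] at h
    obtain ⟨x, hx⟩ := h
    rw [Finset.mem_sdiff] at hx
    exact hx.2 (hsub hx.1)
  suffices H : ∀ d i j, 1 ≤ i → i < j → j ≤ ℓ → j = i + d → 1 < d →
      ¬(i = 1 ∧ j = ℓ) → ∀ e ∈ E, ((cycS c ℓ i ∪ cycS c ℓ j) \ e).Nonempty by
    intro i j h1 h2 h3' h4 h5 e he
    exact H (j - i) i j h1 h2 h3' (by omega) (by omega) h5 e he
  intro d
  induction d using Nat.strong_induction_on with
  | _ d IH =>
  intro i j hi hij hj hjd hd2 hne e he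
  subst hjd
  by_contra hcon
  rw [Finset.not_nonempty_iff_eq_empty, Finset.sdiff_eq_empty_iff_subset,
      Finset.union_subset_iff] at hcon
  obtain ⟨hsi, hsj⟩ := hcon
  have hdu : d ≤ ℓ - 2 := by omega
  have hIH : ∀ a b f, 1 ≤ a → a < b → b ≤ ℓ → 2 ≤ b - a → b - a < d →
      ¬(a = 1 ∧ b = ℓ) → f ∈ E → cycS c ℓ a ∪ cycS c ℓ b ⊆ f → False := by
    intro a b f ha hab hb h2 hlt hne2 hf hsub
    obtain ⟨x, hx⟩ := IH (b - a) hlt a b ha hab hb (by omega) (by omega) hne2 f hf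
    rw [Finset.mem_sdiff] at hx
    exact hx.2 (hsub hx.1)
  have hP1 : ∀ f ∈ E, cycS c ℓ i ⊆ f → cycS c ℓ (i + d - 1) ⊆ f →
      cycS c ℓ (i + d) ⊆ f → False := by
    intro f hf h1 h2' h3'
    rcases Nat.lt_or_ge 2 d with hd3 | hd3
    · exact hIH i (i + d - 1) f hi (by omega) (by omega) (by omega) (by omega)
        (by omega) hf (Finset.union_subset h1 h2')
    · apply hA2' (i + 1) (by omega) (by omega) f hf
      rw [show i + 1 - 1 = i from by omega, show i + 1 + 1 = i + d from by omega]
      refine Finset.union_subset (Finset.union_subset h1 ?_) h3'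
      rw [show i + d - 1 = i + 1 from by omega] at h2'
      exact h2'
  have hP2 : ∀ f ∈ E, cycS c ℓ i ⊆ f → cycS c ℓ (i + 1) ⊆ f →
      cycS c ℓ (i + d) ⊆ f → False := by
    intro f hf h1 h2' h3'
    rcases Nat.lt_or_ge 2 d with hd3 | hd3
    · exact hIH (i + 1) (i + d) f (by omega) (by omega) hj (by omega) (by omega)
        (by omega) hf (Finset.union_subset h2' h3')
    · apply hA2' (i + 1) (by omega) (by omega) f hf
      rw [show i + 1 - 1 = i from by omega, show i + 1 + 1 = i + d from by omega]
      exact Finset.union_subset (Finset.union_subset h1 h2') h3'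
  have hA : ∀ k, i + 1 ≤ k → k ≤ i + d → ¬ c k ⊆ e := by
    intro k hk1 hk2 hsub
    have hskm : cycS c ℓ (k - 1) ⊆ c k := by
      rw [hsnext (k - 1) (by omega), show k - 1 + 1 = k from by omega]
      exact Finset.inter_subset_right
    by_cases hk : k = i + 1
    · subst hk
      exact hP2 e he hsi ((hsfst (i + 1)).trans hsub) hsj
    · by_cases hk' : k = i + d
      · subst hk'
        exact hP1 e he hsi (hskm.trans hsub) hsj
      · exact hIH i k e hi (by omega) (by omega) (by omega) (by omega) (by omega) he
          (Finset.union_subset hsi ((hsfst k).trans hsub))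
  have hB : ∀ k, i + 1 ≤ k → k ≤ i + d → ¬ e ⊆ c k := by
    intro k hk1 hk2 hsub
    have hkE : c k ∈ E := hmem k (by omega) (by omega)
    have hskm : cycS c ℓ (k - 1) ⊆ c k := by
      rw [hsnext (k - 1) (by omega), show k - 1 + 1 = k from by omega]
      exact Finset.inter_subset_right
    by_cases hk : k = i + 1
    · subst hk
      exact hP2 (c (i + 1)) hkE (hssnd i (by omega)) (hsfst (i + 1)) (hsj.trans hsub)
    · by_cases hk' : k = i + d
      · subst hk'
        exact hP1 (c (i + d)) hkE (hsi.trans hsub) hskm (hsfst (i + d))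
      · exact hIH i k (c k) hi (by omega) (by omega) (by omega) (by omega) (by omega)
          hkE (Finset.union_subset (hsi.trans hsub) (hsfst k))
  obtain ⟨c', hc'def⟩ : ∃ c' : ℕ → Finset N, c' = fun k => if k ≤ d then c (i + k) else e :=
    ⟨_, rfl⟩
  have hc'lo : ∀ k, k ≤ d → c' k = c (i + k) := by
    intro k hk; rw [hc'def]; exact if_pos hk
  have hc'hi : ∀ k, d < k → c' k = e := by
    intro k hk; rw [hc'def]; exact if_neg (by omega)
  have hS1 : ∀ m, m ≤ d - 1 → cycS c' (d + 1) m = cycS c ℓ (i + m) := by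
    intro m hm
    rw [cycS, cycS, if_neg (by omega : ¬ m = d + 1), if_neg (by omega : ¬ i + m = ℓ),
        hc'lo m (by omega), hc'lo (m + 1) (by omega), Nat.add_assoc]
  have hSd : cycS c' (d + 1) d = c (i + d) ∩ e := by
    rw [cycS, if_neg (by omega : ¬ d = d + 1), hc'lo d le_rfl, hc'hi (d + 1) (by omega)]
  have hSd1 : cycS c' (d + 1) (d + 1) = e ∩ c (i + 1) := by
    rw [cycS, if_pos rfl, hc'hi (d + 1) (by omega), hc'lo 1 (by omega)]
  have hTd : cycS c ℓ (i + d) ⊆ cycS c' (d + 1) d := by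
    rw [hSd]; exact Finset.subset_inter (hsfst (i + d)) hsj
  have hTd1 : cycS c ℓ i ⊆ cycS c' (d + 1) (d + 1) := by
    rw [hSd1]; exact Finset.subset_inter hsi (hssnd i (by omega))
  have hT2 : cycS c ℓ (i + 2) ⊆ cycS c' (d + 1) 2 := by
    rcases Nat.lt_or_ge 2 d with h | h
    · rw [hS1 2 (by omega)]
    · obtain rfl : d = 2 := by omega
      rw [hSd]; exact Finset.subset_inter (hsfst (i + 2)) hsj
  have hAC : IsAlphaCycle E (d + 1) c' := by
    refine ⟨by omega, ?_, ?_, ?_⟩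
    · intro k hk1 hk2
      rcases le_or_gt k d with hk | hk
      · rw [hc'lo k hk]; exact hmem (i + k) (by omega) (by omega)
      · rw [hc'hi k hk]; exact he
    · intro a b ha1 ha2 hb1 hb2 hab
      rcases le_or_gt a d with had | had
      · rcases le_or_gt b d with hbd | hbd
        · rw [hc'lo a had, hc'lo b hbd]
          exact hA1 (i + a) (i + b) (by omega) (by omega) (by omega) (by omega) (by omega)
        · rw [hc'lo a had, hc'hi b hbd]
          exact Finset.sdiff_nonempty.mpr (hA (i + a) (by omega) (by omega))
      · rcases le_or_gt b d with hbd | hbd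
        · rw [hc'hi a had, hc'lo b hbd]
          exact Finset.sdiff_nonempty.mpr (hB (i + b) (by omega) (by omega))
        · exact absurd (by omega : a = b) hab
    · intro a ha1 ha2 f hf
      rw [Finset.sdiff_nonempty]
      intro hsub
      rw [Finset.union_subset_iff, Finset.union_subset_iff] at hsub
      obtain ⟨⟨hX, hY⟩, hZ⟩ := hsub
      by_cases ha : a = 1
      · subst ha
        rw [if_pos rfl] at hX
        rw [if_neg (by omega)] at hZ
        apply hA2' (i + 1) (by omega) (by omega) f hf
        rw [show i + 1 - 1 = i from by omega]
        refine Finset.union_subset (Finset.union_subset (hTd1.trans hX) ?_) ?_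
        · rw [← hS1 1 (by omega)]; exact hY
        · rw [show i + 1 + 1 = i + 2 from by omega]
          rw [show (1 : ℕ) + 1 = 2 from by norm_num] at hZ
          exact hT2.trans hZ
      · by_cases had1 : a = d + 1
        · subst had1
          rw [if_neg ha] at hX
          rw [if_pos rfl] at hZ
          rw [show d + 1 - 1 = d from by omega] at hX
          refine hP2 f hf (hTd1.trans hY) ?_ (hTd.trans hX)
          rw [← hS1 1 (by omega)]; exact hZ
        · rw [if_neg ha] at hX
          rw [if_neg had1] at hZ
          by_cases hadd : a = d
          · rw [hadd] at hX hY hZ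
            refine hP1 f hf (hTd1.trans hZ) ?_ (hTd.trans hY)
            rw [show i + d - 1 = i + (d - 1) from by omega, ← hS1 (d - 1) le_rfl]
            exact hX
          · apply hA2' (i + a) (by omega) (by omega) f hf
            rw [show i + a - 1 = i + (a - 1) from by omega]
            refine Finset.union_subset (Finset.union_subset ?_ ?_) ?_
            · rw [← hS1 (a - 1) (by omega)]; exact hX
            · rw [← hS1 a (by omega)]; exact hY
            · rcases Nat.lt_or_ge (a + 1) d with hz | hz
              · rw [show i + a + 1 = i + (a + 1) from by omega, ← hS1 (a + 1) (by omega)]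
                exact hZ
              · have hz' : a + 1 = d := by omega
                rw [show i + a + 1 = i + d from by omega]
                rw [hz'] at hZ
                exact hTd.trans hZ
  have harr : (fun k => if k ≤ i + d - (i + 1) + 1 then c (i + 1 + k - 1) else e) = c' := by
    funext k
    rw [hc'def, show i + d - (i + 1) + 1 = d from by omega,
        show i + 1 + k - 1 = i + k from by omega]
  have hfin := hch (i + 1) (i + d) (by omega) (by omega) hj (by omega) e he
    (fun k hk1 hk2 heq => hB k hk1 hk2 (fun x hx => heq ▸ hx))
  rw [show i + d - (i + 1) + 2 = d + 1 from by omega, harr] at hfin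
  exact hfin hAC


end BPO
end

section
/- Every chordless α-cycle of a hypergraph G is a simple cycle of G. -/
open Finset

namespace BPO

variable {N : Type*} [DecidableEq N]

section Aux

variable {E : Finset (Finset N)} {ℓ : ℕ} {c : ℕ → Finset N}

lemma nonempty_sdiff_not_subset {X e : Finset N} (h : (X \ e).Nonempty) : ¬ X ⊆ e := by
  obtain ⟨z, hz⟩ := h
  rw [Finset.mem_sdiff] at hz
  exact fun hs => hz.2 (hs hz.1)

lemma sdiff_ne_mono {X1 X2 X3 Y1 Y2 Y3 e : Finset N} (h1 : X1 ⊆ Y1) (h2 : X2 ⊆ Y2)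
    (h3 : X3 ⊆ Y3) (h : ((X1 ∪ X2 ∪ X3) \ e).Nonempty) : ((Y1 ∪ Y2 ∪ Y3) \ e).Nonempty := by
  obtain ⟨z, hz⟩ := h
  rw [Finset.mem_sdiff] at hz
  refine ⟨z, Finset.mem_sdiff.mpr ⟨?_, hz.2⟩⟩
  have := hz.1
  simp only [Finset.mem_union] at this ⊢
  rcases this with (h | h) | h
  · exact Or.inl (Or.inl (h1 h))
  · exact Or.inl (Or.inr (h2 h))
  · exact Or.inr (h3 h)

lemma eqsub {X Y : Finset N} (h : X = Y) : X ⊆ Y := h ▸ Finset.Subset.refl X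

lemma cycS_subset_left {i : ℕ} : cycS c ℓ i ⊆ c i := by
  rw [cycS]; exact Finset.inter_subset_left

lemma cycS_subset_right {i : ℕ} (h : i < ℓ) : cycS c ℓ i ⊆ c (i + 1) := by
  rw [cycS, if_neg (by omega)]; exact Finset.inter_subset_right

lemma cycS_prev_subset {i : ℕ} (h2 : 2 ≤ i) (hl : i ≤ ℓ) : cycS c ℓ (i - 1) ⊆ c i := by
  rw [cycS, if_neg (by omega : ¬ i - 1 = ℓ), show i - 1 + 1 = i by omega]
  exact Finset.inter_subset_right

lemma a2triple (hC : IsAlphaCycle E ℓ c) {a : ℕ} (ha : 1 ≤ a) (hb : a + 2 ≤ ℓ)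
    {e : Finset N} (he : e ∈ E) :
    ((cycS c ℓ a ∪ cycS c ℓ (a + 1) ∪ cycS c ℓ (a + 2)) \ e).Nonempty := by
  have h := hC.2.2.2 (a + 1) (by omega) (by omega) e he
  rw [if_neg (by omega : ¬ a + 1 = 1), if_neg (by omega : ¬ a + 1 = ℓ),
    show a + 1 - 1 = a by omega, show a + 1 + 1 = a + 2 by omega] at h
  exact h

set_option maxHeartbeats 1600000 in
lemma noBadAux (hC : IsAlphaCycle E ℓ c) (hch : Chordless E ℓ c) (d : ℕ) :
    ∀ a b e, 1 ≤ a → a < b → b ≤ ℓ → b - a = d → 2 ≤ d → d ≤ ℓ - 2 → e ∈ E →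
      cycS c ℓ a ∪ cycS c ℓ b ⊆ e → False := by
  induction d using Nat.strong_induction_on with
  | _ d ih =>
  intro a b e ha hab hb hd h2 hl2 he hsub
  have hl3 : 3 ≤ ℓ := hC.1
  have hsa : cycS c ℓ a ⊆ e := (Finset.union_subset_iff.mp hsub).1
  have hsb : cycS c ℓ b ⊆ e := (Finset.union_subset_iff.mp hsub).2
  -- the key minimality lemma
  have key : ∀ p, a + 1 ≤ p → p ≤ b → ∀ e' ∈ E,
      ¬ (cycS c ℓ a ⊆ e' ∧ cycS c ℓ b ⊆ e' ∧ cycS c ℓ (p - 1) ⊆ e' ∧ cycS c ℓ p ⊆ e') := by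
    rintro p hp1 hp2 e' he' ⟨q1, q2, q3, q4⟩
    by_cases hd2 : d = 2
    · have h3 : cycS c ℓ (a + 1) ⊆ e' := by
        rcases (by omega : p = a + 1 ∨ p = a + 2) with h | h
        · rw [← h]; exact q4
        · rw [show a + 1 = p - 1 by omega]; exact q3
      have base := a2triple hC ha (by omega : a + 2 ≤ ℓ) he'
      refine nonempty_sdiff_not_subset base ?_
      refine Finset.union_subset (Finset.union_subset q1 h3) ?_
      rw [show a + 2 = b by omega]; exact q2
    · by_cases hpa : p = a + 1
      · exact ih (d - 1) (by omega) (a + 1) b e' (by omega) (by omega) hb (by omega)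
          (by omega) (by omega) he' (Finset.union_subset (by rw [← hpa]; exact q4) q2)
      · by_cases hpb : p = b
        · exact ih (d - 1) (by omega) a (b - 1) e' ha (by omega) (by omega) (by omega)
            (by omega) (by omega) he'
            (Finset.union_subset q1 (by rw [show b - 1 = p - 1 by omega]; exact q3))
        · exact ih (p - a) (by omega) a p e' ha (by omega) (by omega) rfl (by omega)
            (by omega) he' (Finset.union_subset q1 q4)
  have hne : ∀ k, a + 1 ≤ k → k ≤ b → e ≠ c k := by
    intro k hk1 hk2 heq
    refine key k hk1 hk2 e he ⟨hsa, hsb, ?_, ?_⟩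
    · rw [heq]; exact cycS_prev_subset (by omega) (by omega)
    · rw [heq]; exact cycS_subset_left
  apply hch (a + 1) b (by omega) (by omega) hb (by omega) e he hne
  simp only [show b - (a + 1) + 2 = b - a + 1 from by omega,
    show b - (a + 1) + 1 = b - a from by omega]
  set f : ℕ → Finset N := fun k => if k ≤ b - a then c (a + 1 + k - 1) else e with hf
  have hDval : ∀ y, 1 ≤ y → y ≤ b - a → f y = c (a + y) := by
    intro y h1 h2'
    simp only [hf]
    rw [if_pos h2', show a + 1 + y - 1 = a + y by omega]
  have hDe : ∀ y, b - a < y → f y = e := by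
    intro y h1
    simp only [hf]
    rw [if_neg (by omega)]
  have hT1 : ∀ y, 1 ≤ y → y + 1 ≤ b - a → cycS f (b - a + 1) y = cycS c ℓ (a + y) := by
    intro y h1 h2'
    rw [cycS, if_neg (by omega : ¬ y = b - a + 1), hDval y h1 (by omega),
      hDval (y + 1) (by omega) h2', cycS, if_neg (by omega : ¬ a + y = ℓ),
      show a + (y + 1) = a + y + 1 by omega]
  have hT2 : cycS c ℓ b ⊆ cycS f (b - a + 1) (b - a) := by
    have hrhs : cycS f (b - a + 1) (b - a) = c b ∩ e := by
      rw [cycS, if_neg (by omega : ¬ b - a = b - a + 1), hDval (b - a) (by omega) le_rfl,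
        hDe (b - a + 1) (by omega), show a + (b - a) = b by omega]
    rw [hrhs]
    exact Finset.subset_inter cycS_subset_left hsb
  have hT3 : cycS c ℓ a ⊆ cycS f (b - a + 1) (b - a + 1) := by
    have hrhs : cycS f (b - a + 1) (b - a + 1) = e ∩ c (a + 1) := by
      rw [cycS, if_pos rfl, hDe (b - a + 1) (by omega), hDval 1 le_rfl (by omega)]
    rw [hrhs]
    exact Finset.subset_inter hsa (cycS_subset_right (by omega))
  refine ⟨by omega, ?_, ?_, ?_⟩
  · intro x hx1 hx2
    by_cases hx : x ≤ b - a
    · rw [hDval x hx1 hx]; exact hC.2.1 (a + x) (by omega) (by omega)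
    · rw [hDe x (by omega)]; exact he
  · intro x y hx1 hx2 hy1 hy2 hxy
    by_cases h1 : x ≤ b - a <;> by_cases h2' : y ≤ b - a
    · rw [hDval x hx1 h1, hDval y hy1 h2']
      exact hC.2.2.1 (a + x) (a + y) (by omega) (by omega) (by omega) (by omega) (by omega)
    · rw [hDval x hx1 h1, hDe y (by omega)]
      by_contra hcon
      have hsubc : c (a + x) ⊆ e := by
        rwa [Finset.not_nonempty_iff_eq_empty, Finset.sdiff_eq_empty_iff_subset] at hcon
      exact key (a + x) (by omega) (by omega) e he
        ⟨hsa, hsb, (cycS_prev_subset (by omega) (by omega)).trans hsubc,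
          cycS_subset_left.trans hsubc⟩
    · rw [hDe x (by omega), hDval y hy1 h2']
      by_contra hcon
      have hsubc : e ⊆ c (a + y) := by
        rwa [Finset.not_nonempty_iff_eq_empty, Finset.sdiff_eq_empty_iff_subset] at hcon
      exact key (a + y) (by omega) (by omega) (c (a + y)) (hC.2.1 (a + y) (by omega) (by omega))
        ⟨hsa.trans hsubc, hsb.trans hsubc, cycS_prev_subset (by omega) (by omega),
          cycS_subset_left⟩
    · exact absurd (show x = y by omega) hxy
  · intro x hx1 hx2 e' he'
    rcases (by omega : x = 1 ∨ (2 ≤ x ∧ x + 1 ≤ b - a) ∨ x = b - a ∨ x = b - a + 1)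
      with hc1 | hc2 | hc3 | hc4
    · subst hc1
      rw [if_pos rfl, if_neg (by omega : ¬ (1 : ℕ) = b - a + 1),
        show (1 : ℕ) + 1 = 2 by norm_num]
      have base := a2triple hC ha (by omega : a + 2 ≤ ℓ) he'
      refine sdiff_ne_mono hT3 (eqsub (hT1 1 le_rfl (by omega)).symm) ?_ base
      by_cases hba : b - a = 2
      · rw [show a + 2 = b by omega, show (2 : ℕ) = b - a from hba.symm]
        exact hT2
      · exact eqsub (hT1 2 (by omega) (by omega)).symm
    · rw [if_neg (by omega : ¬ x = 1), if_neg (by omega : ¬ x = b - a + 1)]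
      have base := a2triple hC (show 1 ≤ a + x - 1 by omega) (by omega : a + x - 1 + 2 ≤ ℓ) he'
      rw [show a + x - 1 + 1 = a + x by omega, show a + x - 1 + 2 = a + x + 1 by omega] at base
      refine sdiff_ne_mono ?_ (eqsub (hT1 x (by omega) hc2.2).symm) ?_ base
      · rw [show a + x - 1 = a + (x - 1) by omega, ← hT1 (x - 1) (by omega) (by omega)]
      · by_cases hxx : x + 1 = b - a
        · rw [show a + x + 1 = b by omega, hxx]; exact hT2
        · rw [show a + x + 1 = a + (x + 1) by omega, ← hT1 (x + 1) (by omega) (by omega)]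
    · subst hc3
      rw [if_neg (by omega : ¬ b - a = 1), if_neg (by omega : ¬ b - a = b - a + 1)]
      by_contra hcon
      have hsubU : cycS f (b - a + 1) (b - a - 1) ∪ cycS f (b - a + 1) (b - a) ∪
          cycS f (b - a + 1) (b - a + 1) ⊆ e' := by
        rwa [Finset.not_nonempty_iff_eq_empty, Finset.sdiff_eq_empty_iff_subset] at hcon
      have u1 := (Finset.subset_union_left.trans Finset.subset_union_left).trans hsubU
      have u2 := (Finset.subset_union_right.trans Finset.subset_union_left).trans hsubU
      have u3 := Finset.subset_union_right.trans hsubU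
      refine key b (by omega) le_rfl e' he' ⟨hT3.trans u3, hT2.trans u2, ?_, hT2.trans u2⟩
      have heq := hT1 (b - a - 1) (by omega) (by omega)
      rw [show a + (b - a - 1) = b - 1 by omega] at heq
      exact (eqsub heq.symm).trans u1
    · subst hc4
      rw [if_neg (by omega : ¬ b - a + 1 = 1), if_pos rfl,
        show b - a + 1 - 1 = b - a by omega]
      by_contra hcon
      have hsubU : cycS f (b - a + 1) (b - a) ∪ cycS f (b - a + 1) (b - a + 1) ∪
          cycS f (b - a + 1) 1 ⊆ e' := by
        rwa [Finset.not_nonempty_iff_eq_empty, Finset.sdiff_eq_empty_iff_subset] at hcon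
      have u1 := (Finset.subset_union_left.trans Finset.subset_union_left).trans hsubU
      have u2 := (Finset.subset_union_right.trans Finset.subset_union_left).trans hsubU
      have u3 := Finset.subset_union_right.trans hsubU
      refine key (a + 1) le_rfl (by omega) e' he'
        ⟨hT3.trans u2, hT2.trans u1, ?_, (eqsub (hT1 1 le_rfl (by omega)).symm).trans u3⟩
      rw [show a + 1 - 1 = a by omega]
      exact hT3.trans u2

end Aux

theorem stmt6 {N : Type*} [DecidableEq N] (E : Finset (Finset N))
    (hcard : ∀ e ∈ E, 2 ≤ e.card) (ℓ : ℕ) (c : ℕ → Finset N)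
    (hC : IsAlphaCycle E ℓ c) (hch : Chordless E ℓ c) :
    IsSimpleCycle E ℓ c := by
  refine ⟨hC.1, hC.2.1, ?_⟩
  intro i j k hi hij hjk hk e he
  by_contra hne
  have hsub : cycS c ℓ i ∪ cycS c ℓ j ∪ cycS c ℓ k ⊆ e := by
    rwa [Finset.not_nonempty_iff_eq_empty, Finset.sdiff_eq_empty_iff_subset] at hne
  have q1 : cycS c ℓ i ⊆ e :=
    (Finset.subset_union_left.trans Finset.subset_union_left).trans hsub
  have q2 : cycS c ℓ j ⊆ e :=
    (Finset.subset_union_right.trans Finset.subset_union_left).trans hsub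
  have q3 : cycS c ℓ k ⊆ e := Finset.subset_union_right.trans hsub
  by_cases h1 : 2 ≤ j - i
  · exact noBadAux hC hch (j - i) i j e hi hij (by omega) rfl h1 (by omega) he
      (Finset.union_subset q1 q2)
  · by_cases h2 : 2 ≤ k - j
    · exact noBadAux hC hch (k - j) j k e (by omega) hjk hk rfl h2 (by omega) he
        (Finset.union_subset q2 q3)
    · have base := a2triple hC hi (by omega : i + 2 ≤ ℓ) he
      refine nonempty_sdiff_not_subset base ?_
      rw [show i + 1 = j by omega, show i + 2 = k by omega]
      exact hsub

end BPO
end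

section
/- Let G = (V,E) be a hypergraph, let v' ∈ V, and let V' = V \ {v'}. Fix, for each edge e of the induced subhypergraph G_{V'}, a representative e'(e) ∈ E with e = e'(e) ∩ V', and let π : ℝ^{V∪E} → ℝ^{V'∪E_{V'}} be the linear map with π(z)_v = z_v for v ∈ V' and π(z)_e = z_{e'(e)} for e ∈ E_{V'}. Then MP(G_{V'}) = π( MP(G) ∩ { z : z_{v'} = 1 } ). -/
open Finset

namespace BPO

variable {N : Type*} [DecidableEq N]

-- basic helpers
lemma ev_coord {V : Finset N} {E : Finset (Finset N)} (z : Pt V E) {p : Finset N}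
    (h : p ∈ coords V E) : ev z p = z ⟨p, h⟩ := dif_pos h

lemma edge_mem_coords {V : Finset N} {E : Finset (Finset N)} {e : Finset N} (h : e ∈ E) :
    e ∈ coords V E := Finset.mem_union_left _ h

lemma vert_mem_coords {V : Finset N} {E : Finset (Finset N)} {v : N} (h : v ∈ V) :
    ({v} : Finset N) ∈ coords V E :=
  Finset.mem_union_right _ (Finset.mem_image_of_mem _ h)

lemma coords_cases {V : Finset N} {E : Finset (Finset N)} {p : Finset N}
    (h : p ∈ coords V E) (hne : p ∉ E) : ∃ v ∈ V, p = {v} := by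
  rcases Finset.mem_union.1 h with h' | h'
  · exact absurd h' hne
  · obtain ⟨v, hv, rfl⟩ := Finset.mem_image.1 h'
    exact ⟨v, hv, rfl⟩

lemma indE_card {E : Finset (Finset N)} {W : Finset N} {g : Finset N}
    (h : g ∈ indE E W) : 2 ≤ g.card := (Finset.mem_filter.1 h).2

lemma indE_subset {E : Finset (Finset N)} {W : Finset N} {g : Finset N}
    (h : g ∈ indE E W) : g ⊆ W := by
  obtain ⟨e, _, rfl⟩ := Finset.mem_image.1 (Finset.mem_filter.1 h).1
  exact Finset.inter_subset_right

lemma singleton_notMem_indE {E : Finset (Finset N)} {W : Finset N} {v : N} :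
    ({v} : Finset N) ∉ indE E W := fun h => by simpa using indE_card h

lemma ev_binary {V : Finset N} {E : Finset (Finset N)} {z : Pt V E}
    (hz : ∀ p, z p = 0 ∨ z p = 1) (q : Finset N) : ev z q = 0 ∨ ev z q = 1 := by
  unfold ev
  split
  · exact hz _
  · split
    · exact Or.inr rfl
    · exact Or.inl rfl

lemma prod_binary {ι : Type*} {s : Finset ι} {f : ι → ℝ}
    (h : ∀ i ∈ s, f i = 0 ∨ f i = 1) : ∏ i ∈ s, f i = 0 ∨ ∏ i ∈ s, f i = 1 := by
  classical
  by_cases h0 : ∃ i ∈ s, f i = 0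
  · obtain ⟨i, hi, hfi⟩ := h0
    exact Or.inl (Finset.prod_eq_zero hi hfi)
  · push_neg at h0
    refine Or.inr (Finset.prod_eq_one fun i hi => ?_)
    rcases h i hi with h1 | h1
    · exact absurd h1 (h0 i hi)
    · exact h1

-- the face lemma
lemma face_inter (V : Finset N) (E : Finset (Finset N)) {v' : N} (hv' : v' ∈ V) :
    MP V E ∩ {z | ev z {v'} = 1} =
      convexHull ℝ (mlSet V E ∩ {z | ev z {v'} = 1}) := by
  classical
  set c : {p : Finset N // p ∈ coords V E} := ⟨{v'}, vert_mem_coords hv'⟩ with hc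
  have hevc : ∀ z : Pt V E, ev z {v'} = z c := fun z => ev_coord z _
  apply Set.Subset.antisymm
  · rintro z ⟨hz, hc1⟩
    rw [MP, _root_.convexHull_eq] at hz
    obtain ⟨ι, t, w, p, hw0, hw1, hp, hcm⟩ := hz
    have hsum : ∑ i ∈ t, w i • p i = z := by
      rw [← hcm, Finset.centerMass_eq_of_sum_1 _ _ hw1]
    have hzc : ∑ i ∈ t, w i * p i c = 1 := by
      have := congrFun hsum c
      rw [Finset.sum_apply] at this
      simp only [Pi.smul_apply, smul_eq_mul] at this
      rw [this]
      rw [Set.mem_setOf_eq, hevc] at hc1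
      exact hc1
    have hkey : ∀ i ∈ t, w i * (1 - p i c) = 0 := by
      rw [← Finset.sum_eq_zero_iff_of_nonneg]
      · have : ∑ i ∈ t, w i * (1 - p i c) = (∑ i ∈ t, w i) - ∑ i ∈ t, w i * p i c := by
          rw [← Finset.sum_sub_distrib]
          exact Finset.sum_congr rfl fun i _ => by ring
        rw [this, hw1, hzc, sub_self]
      · intro i hi
        apply mul_nonneg (hw0 i hi)
        rcases (hp i hi).1 c with h1 | h1 <;> rw [h1] <;> norm_num
    have hone : ∀ i ∈ t, w i ≠ 0 → p i c = 1 := by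
      intro i hi hwi
      have := hkey i hi
      rcases mul_eq_zero.1 this with h1 | h1
      · exact absurd h1 hwi
      · linarith [sub_eq_zero.1 h1]
    rw [_root_.convexHull_eq]
    refine ⟨ι, t.filter (fun i => w i ≠ 0), w, p, fun i hi => hw0 i (Finset.mem_filter.1 hi).1,
      ?_, ?_, ?_⟩
    · rw [Finset.sum_filter_ne_zero, hw1]
    · intro i hi
      obtain ⟨hit, hwi⟩ := Finset.mem_filter.1 hi
      exact ⟨hp i hit, by rw [Set.mem_setOf_eq, hevc]; exact hone i hit hwi⟩
    · rw [Finset.centerMass_eq_of_sum_1 _ _ (by rw [Finset.sum_filter_ne_zero, hw1])]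
      rw [← hsum]
      apply Finset.sum_filter_of_ne
      intro i _ hne hwi
      exact hne (by rw [hwi, zero_smul])
  · apply convexHull_min
    · exact Set.inter_subset_inter_left _ (subset_convexHull ℝ _)
    · apply Convex.inter (convex_convexHull ℝ _)
      have : {z : Pt V E | ev z {v'} = 1} = {z : Pt V E | z c = 1} := by
        ext z; rw [Set.mem_setOf_eq, Set.mem_setOf_eq, hevc]
      rw [this]
      exact convex_hyperplane ⟨fun _ _ => rfl, fun _ _ => rfl⟩ 1

lemma proj_mem (V : Finset N) (E : Finset (Finset N)) (hVsub : ∀ e ∈ E, e ⊆ V)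
    (v' : N) (rep : Finset N → Finset N)
    (hrep : ∀ e ∈ indE E (V.erase v'), rep e ∈ E ∧ rep e ∩ V.erase v' = e)
    {z : Pt V E} (hz : z ∈ mlSet V E) (hz1 : ev z {v'} = 1) :
    (fun (p : {p : Finset N // p ∈ coords (V.erase v') (indE E (V.erase v'))}) =>
      if p.1 ∈ indE E (V.erase v') then ev z (rep p.1) else ev z p.1) ∈
      mlSet (V.erase v') (indE E (V.erase v')) := by
  constructor
  · intro p
    dsimp only
    split
    · exact ev_binary hz.1 _
    · exact ev_binary hz.1 _
  · intro e he
    have hsubV' : e ⊆ V.erase v' := indE_subset he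
    rw [ev_coord _ (edge_mem_coords he)]
    dsimp only
    rw [if_pos he]
    have hprodeq : ∀ v ∈ e,
        ev (fun (p : {p : Finset N // p ∈ coords (V.erase v') (indE E (V.erase v'))}) =>
          if p.1 ∈ indE E (V.erase v') then ev z (rep p.1) else ev z p.1) {v} = ev z {v} := by
      intro v hv
      rw [ev_coord _ (vert_mem_coords (hsubV' hv))]
      dsimp only
      rw [if_neg singleton_notMem_indE]
    rw [Finset.prod_congr rfl hprodeq]
    rw [hz.2 (rep e) (hrep e he).1]
    have hsub : e ⊆ rep e := by
      conv_lhs => rw [← (hrep e he).2]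
      exact Finset.inter_subset_left
    refine (Finset.prod_subset hsub ?_).symm
    intro x hx hxe
    have hxv' : x = v' := by
      by_contra hne
      have hxV : x ∈ V := hVsub _ (hrep e he).1 hx
      have : x ∈ rep e ∩ V.erase v' := Finset.mem_inter.2 ⟨hx, Finset.mem_erase.2 ⟨hne, hxV⟩⟩
      rw [(hrep e he).2] at this
      exact hxe this
    rw [hxv']
    exact hz1

lemma lift_mem (V : Finset N) (E : Finset (Finset N))
    (hVsub : ∀ e ∈ E, e ⊆ V) (v' : N) (hv' : v' ∈ V) (rep : Finset N → Finset N)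
    (hrep : ∀ e ∈ indE E (V.erase v'), rep e ∈ E ∧ rep e ∩ V.erase v' = e)
    {y : Pt (V.erase v') (indE E (V.erase v'))}
    (hy : y ∈ mlSet (V.erase v') (indE E (V.erase v'))) :
    ∃ z ∈ mlSet V E ∩ {z | ev z {v'} = 1},
      (fun (p : {p : Finset N // p ∈ coords (V.erase v') (indE E (V.erase v'))}) =>
        if p.1 ∈ indE E (V.erase v') then ev z (rep p.1) else ev z p.1) = y := by
  classical
  set z : Pt V E := fun p => ∏ v ∈ p.1.erase v', ev y {v} with hzdef
  have hzq : ∀ {q : Finset N} (h : q ∈ coords V E), ev z q = ∏ v ∈ q.erase v', ev y {v} := by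
    intro q h
    rw [ev_coord _ h]
  have hz1 : ev z {v'} = 1 := by
    rw [hzq (vert_mem_coords hv'), Finset.erase_singleton, Finset.prod_empty]
  have hzsingle : ∀ {v : N}, v ∈ V → v ≠ v' → ev z {v} = ev y {v} := by
    intro v hv hne
    rw [hzq (vert_mem_coords hv), Finset.erase_eq_of_notMem (by simp [Ne.symm hne]),
      Finset.prod_singleton]
  refine ⟨z, ⟨⟨?_, ?_⟩, ?_⟩, ?_⟩
  · intro p
    exact prod_binary fun v _ => ev_binary hy.1 _
  · intro e he
    rw [hzq (edge_mem_coords he)]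
    have hstep : ∀ v ∈ e, ev z {v} =
        (fun v => if v = v' then (1 : ℝ) else ev y {v}) v := by
      intro v hv
      dsimp only
      split
      · rename_i h; rw [h]; exact hz1
      · exact hzsingle (hVsub e he hv) ‹_›
    have herase := Finset.prod_erase (f := fun v => if v = v' then (1 : ℝ) else ev y {v})
      (a := v') e (by simp)
    rw [Finset.prod_congr rfl hstep, ← herase]
    apply Finset.prod_congr rfl
    intro v hv
    simp [(Finset.mem_erase.1 hv).1]
  · exact hz1
  · funext p
    by_cases hp : p.1 ∈ indE E (V.erase v')
    · rw [if_pos hp]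
      have hrE := (hrep p.1 hp).1
      have herase : (rep p.1).erase v' = p.1 := by
        ext x
        rw [Finset.mem_erase]
        constructor
        · rintro ⟨hne, hx⟩
          rw [← (hrep p.1 hp).2]
          exact Finset.mem_inter.2 ⟨hx, Finset.mem_erase.2 ⟨hne, hVsub _ hrE hx⟩⟩
        · intro hx
          rw [← (hrep p.1 hp).2] at hx
          obtain ⟨h1, h2⟩ := Finset.mem_inter.1 hx
          exact ⟨(Finset.mem_erase.1 h2).1, h1⟩
      rw [hzq (edge_mem_coords hrE), herase, ← hy.2 p.1 hp, ev_coord _ (edge_mem_coords hp)]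
    · rw [if_neg hp]
      obtain ⟨v, hv, hpv⟩ := coords_cases p.2 hp
      have hvne : v ≠ v' := (Finset.mem_erase.1 hv).1
      have hvV : v ∈ V := Finset.mem_of_mem_erase hv
      have : ev z p.1 = ev y p.1 := by
        rw [hpv]
        rw [hzsingle hvV hvne]
      rw [this, ev_coord _ p.2]

theorem stmt7 {N : Type*} [DecidableEq N] (V : Finset N) (E : Finset (Finset N))
    (hcard : ∀ e ∈ E, 2 ≤ e.card) (hVsub : ∀ e ∈ E, e ⊆ V)
    (hcover : ∀ v ∈ V, ∃ e ∈ E, v ∈ e)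
    (v' : N) (hv' : v' ∈ V) (rep : Finset N → Finset N)
    (hrep : ∀ e ∈ indE E (V.erase v'), rep e ∈ E ∧ rep e ∩ V.erase v' = e) :
    MP (V.erase v') (indE E (V.erase v')) =
      (fun (z : Pt V E)
          (p : {p : Finset N // p ∈ coords (V.erase v') (indE E (V.erase v'))}) =>
        if p.1 ∈ indE E (V.erase v') then ev z (rep p.1) else ev z p.1) ''
        (MP V E ∩ { z | ev z {v'} = 1 }) := by
  classical
  set F : Pt V E → Pt (V.erase v') (indE E (V.erase v')) :=
    fun (z : Pt V E)
        (p : {p : Finset N // p ∈ coords (V.erase v') (indE E (V.erase v'))}) =>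
      if p.1 ∈ indE E (V.erase v') then ev z (rep p.1) else ev z p.1 with hFdef
  have hcoords : ∀ p : {p : Finset N // p ∈ coords (V.erase v') (indE E (V.erase v'))},
      (if p.1 ∈ indE E (V.erase v') then rep p.1 else p.1) ∈ coords V E := by
    intro p
    split
    · exact edge_mem_coords (hrep p.1 ‹_›).1
    · obtain ⟨v, hv, hpv⟩ := coords_cases p.2 ‹_›
      rw [hpv]
      exact vert_mem_coords (Finset.mem_of_mem_erase hv)
  have hFeq : F = fun z p => z ⟨_, hcoords p⟩ := by
    funext z p
    rw [hFdef]
    dsimp only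
    by_cases hp : p.1 ∈ indE E (V.erase v')
    · simp only [hp, if_true, ite_true]
      exact ev_coord z _
    · simp only [hp, if_false, ite_false]
      exact ev_coord z _
  have hlin : IsLinearMap ℝ F := by
    rw [hFeq]
    exact ⟨fun a b => rfl, fun c x => rfl⟩
  rw [face_inter V E hv']
  rw [hlin.image_convexHull]
  rw [MP]
  congr 1
  apply Set.Subset.antisymm
  · intro y hy
    obtain ⟨z, hz, hFz⟩ := lift_mem V E hVsub v' hv' rep hrep hy
    exact ⟨z, hz, hFz⟩
  · rintro _ ⟨z, ⟨hz, hz1⟩, rfl⟩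
    exact proj_mem V E hVsub v' rep hrep hz hz1

end BPO
end
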